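/- arXiv:2007.12752 — 10 statements merged into one kernel-verified Lean document; each statement's English description precedes it below -/
import Mathlib

section
/- Let I ⊆ ℝ be a nondegenerate interval, let J ∈ Ω(I) (i.e. J = I_f for some nondecreasing sequence (f_n) of continuous functions on I), and let K ∈ Ω₀(I) (i.e. K = I_g for some max-family (g_n) on I). Then J ∪ K ∈ Ω₀(I): there exists a max-family (h_n) on I with I_h = J ∪ K. -/
open Set Filter Topology

/-- `limSet I f` is the set `I_f = {x ∈ I : lim_{n→∞} f_n(x) = +∞}`. -/
def limSet (I : Set ℝ) (f : ℕ → ℝ → ℝ) : Set ℝ :=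
  {x ∈ I | Tendsto (fun n => f n x) atTop atTop}

/-- A max-family on `I`: a nondecreasing sequence of continuous functions whose integrals
over every nondegenerate subinterval of `I` tend to `+∞`. -/
def IsMaxFamily (I : Set ℝ) (f : ℕ → ℝ → ℝ) : Prop :=
  (∀ n, ContinuousOn (f n) I) ∧
  (∀ n, ∀ x ∈ I, f n x ≤ f (n + 1) x) ∧
  (∀ x ∈ I, ∀ y ∈ I, x < y →
    Tendsto (fun n => ∫ t in x..y, f n t) atTop atTop)

/-- `J ∈ Ω(I)`: `J = I_f` for some nondecreasing sequence of continuous functions on `I`. -/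
def MemOmega (I : Set ℝ) (J : Set ℝ) : Prop :=
  ∃ f : ℕ → ℝ → ℝ, (∀ n, ContinuousOn (f n) I) ∧
    (∀ n, ∀ x ∈ I, f n x ≤ f (n + 1) x) ∧ limSet I f = J

/-- `K ∈ Ω₀(I)`: `K = I_g` for some max-family `g` on `I`. -/
def MemOmegaZero (I : Set ℝ) (K : Set ℝ) : Prop :=
  ∃ g : ℕ → ℝ → ℝ, IsMaxFamily I g ∧ limSet I g = K

lemma max_tendsto_iff {a b : ℕ → ℝ} (ha : Monotone a) (hb : Monotone b) :
    Tendsto (fun n => max (a n) (b n)) atTop atTop ↔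
      Tendsto a atTop atTop ∨ Tendsto b atTop atTop := by
  constructor
  · intro h
    by_contra hc
    push_neg at hc
    rcases tendsto_of_monotone ha with h1 | ⟨l1, h1⟩
    · exact hc.1 h1
    rcases tendsto_of_monotone hb with h2 | ⟨l2, h2⟩
    · exact hc.2 h2
    have : Tendsto (fun n => max (a n) (b n)) atTop (𝓝 (max l1 l2)) := h1.max h2
    exact not_tendsto_nhds_of_tendsto_atTop h (max l1 l2) this
  · rintro (h | h)
    · exact tendsto_atTop_mono (fun n => le_max_left _ _) h
    · exact tendsto_atTop_mono (fun n => le_max_right _ _) h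

/-- If `J ∈ Ω(I)` and `K ∈ Ω₀(I)` then `J ∪ K ∈ Ω₀(I)`. -/
theorem stmt_3 (I : Set ℝ) (hI : I.OrdConnected) (hInt : I.Nontrivial)
    (J K : Set ℝ) (hJ : MemOmega I J) (hK : MemOmegaZero I K) :
    MemOmegaZero I (J ∪ K) := by
  obtain ⟨f, hfc, hfm, hfJ⟩ := hJ
  obtain ⟨g, ⟨hgc, hgm, hgi⟩, hgK⟩ := hK
  refine ⟨fun n x => max (f n x) (g n x), ⟨fun n => ((hfc n).sup (hgc n)),
    fun n x hx => max_le_max (hfm n x hx) (hgm n x hx), ?_⟩, ?_⟩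
  · intro x hx y hy hxy
    refine tendsto_atTop_mono (fun n => ?_) (hgi x hx y hy hxy)
    have hsub : Set.uIcc x y ⊆ I := by
      rw [Set.uIcc_of_le hxy.le]; exact hI.out hx hy
    have hig : IntervalIntegrable (g n) MeasureTheory.volume x y :=
      ((hgc n).mono hsub).intervalIntegrable
    have him : IntervalIntegrable (fun t => max (f n t) (g n t)) MeasureTheory.volume x y :=
      ((((hfc n).sup (hgc n))).mono hsub).intervalIntegrable
    exact intervalIntegral.integral_mono_on hxy.le hig him
      (fun t _ => le_max_right _ _)
  · rw [← hfJ, ← hgK]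
    ext x
    simp only [limSet, Set.mem_setOf_eq, Set.mem_union]
    constructor
    · rintro ⟨hx, ht⟩
      rcases (max_tendsto_iff (monotone_nat_of_le_succ fun n => hfm n x hx)
        (monotone_nat_of_le_succ fun n => hgm n x hx)).1 ht with h | h
      · exact Or.inl ⟨hx, h⟩
      · exact Or.inr ⟨hx, h⟩
    · rintro (⟨hx, ht⟩ | ⟨hx, ht⟩) <;>
      exact ⟨hx, (max_tendsto_iff (monotone_nat_of_le_succ fun n => hfm n x hx)
        (monotone_nat_of_le_succ fun n => hgm n x hx)).2 (by tauto)⟩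
end

section
/- Let (f_n : I → ℝ) and (g_n : I → ℝ) be two sequences of continuous functions on a nondegenerate interval I ⊆ ℝ with f₁ ≤ f₂ ≤ ⋯ and g₁ ≤ g₂ ≤ ⋯ pointwise. Assume that for every x ∈ I_f the sequence (g_n(x)) converges to some η ∈ (0, +∞], and for every x ∈ I_g the sequence (f_n(x)) converges to some η ∈ (0, +∞]. Then I_{f·g} = I_f ∪ I_g, where I_{f·g} := {x ∈ I : lim_{n→∞} f_n(x)·g_n(x) = +∞}. -/
open Set Filter Topology

/-- The sequence `(a_n)` converges to some `η ∈ (0, +∞]`. -/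
def TendsToPosLimit (a : ℕ → ℝ) : Prop :=
  (∃ η : ℝ, 0 < η ∧ Tendsto a atTop (𝓝 η)) ∨ Tendsto a atTop atTop

/-- A bounded monotone sequence converges, so if neither factor diverges the product converges
and cannot tend to `+∞`. -/
theorem Monotone.tendsto_atTop_or_of_tendsto_mul_atTop {ι : Type*} [SemilatticeSup ι]
    [Nonempty ι] {a b : ι → ℝ} (ha : Monotone a) (hb : Monotone b)
    (hab : Tendsto (fun i => a i * b i) atTop atTop) :
    Tendsto a atTop atTop ∨ Tendsto b atTop atTop := by
  rcases tendsto_atTop_of_monotone ha with ha_top | ⟨L, ha_lim⟩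
  · exact Or.inl ha_top
  rcases tendsto_atTop_of_monotone hb with hb_top | ⟨M, hb_lim⟩
  · exact Or.inr hb_top
  exact absurd (ha_lim.mul hb_lim) (not_tendsto_nhds_of_tendsto_atTop hab (L * M))

theorem TendsToPosLimit.tendsto_atTop_mul {a b : ℕ → ℝ} (hb : TendsToPosLimit b)
    (ha : Tendsto a atTop atTop) : Tendsto (fun n => a n * b n) atTop atTop := by
  rcases hb with ⟨η, hη, hb_lim⟩ | hb_top
  · exact ha.atTop_mul_pos hη hb_lim
  · exact ha.atTop_mul_atTop₀ hb_top

theorem TendsToPosLimit.tendsto_mul_atTop {a b : ℕ → ℝ} (ha : TendsToPosLimit a)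
    (hb : Tendsto b atTop atTop) : Tendsto (fun n => a n * b n) atTop atTop := by
  simpa only [mul_comm] using ha.tendsto_atTop_mul hb

theorem stmt_4_general (I : Set ℝ)
    (f g : ℕ → ℝ → ℝ)
    (hfm : ∀ n, ∀ x ∈ I, f n x ≤ f (n + 1) x)
    (hgm : ∀ n, ∀ x ∈ I, g n x ≤ g (n + 1) x)
    (hg : ∀ x ∈ limSet I f, TendsToPosLimit (fun n => g n x))
    (hf : ∀ x ∈ limSet I g, TendsToPosLimit (fun n => f n x)) :
    limSet I (fun n x => f n x * g n x) = limSet I f ∪ limSet I g := by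
  ext x
  constructor
  · rintro ⟨hx, hfg⟩
    have hf_mono : Monotone (f · x) := monotone_nat_of_le_succ (hfm · x hx)
    have hg_mono : Monotone (g · x) := monotone_nat_of_le_succ (hgm · x hx)
    exact (hf_mono.tendsto_atTop_or_of_tendsto_mul_atTop hg_mono hfg).imp (⟨hx, ·⟩) (⟨hx, ·⟩)
  · rintro (hxf | hxg)
    · exact ⟨hxf.1, (hg x hxf).tendsto_atTop_mul hxf.2⟩
    · exact ⟨hxg.1, (hf x hxg).tendsto_mul_atTop hxg.2⟩

/-- If `f`, `g` are nondecreasing sequences of continuous functions such that on `I_f` the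
sequence `g_n(x)` converges to some `η ∈ (0,+∞]` and on `I_g` the sequence `f_n(x)` converges
to some `η ∈ (0,+∞]`, then `I_{f·g} = I_f ∪ I_g`. -/
theorem stmt_4 (I : Set ℝ) (hI : I.OrdConnected) (hInt : I.Nontrivial)
    (f g : ℕ → ℝ → ℝ)
    (hfc : ∀ n, ContinuousOn (f n) I) (hgc : ∀ n, ContinuousOn (g n) I)
    (hfm : ∀ n, ∀ x ∈ I, f n x ≤ f (n + 1) x)
    (hgm : ∀ n, ∀ x ∈ I, g n x ≤ g (n + 1) x)
    (hg : ∀ x ∈ limSet I f, TendsToPosLimit (fun n => g n x))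
    (hf : ∀ x ∈ limSet I g, TendsToPosLimit (fun n => f n x)) :
    limSet I (fun n x => f n x * g n x) = limSet I f ∪ limSet I g :=
  stmt_4_general I f g hfm hgm hg hf
end

section
/- Let I ⊆ ℝ be a nondegenerate interval and let (D_n)_{n=0}^∞ be a sequence of closed subsets of I such that D₀ = I and D_{n+1} ⊆ int(D_n) (interior relative to I) for all n ≥ 0. Then ⋂_{n=0}^∞ D_n ∈ Ω(I); that is, there exists a sequence of continuous functions d₁ ≤ d₂ ≤ ⋯ on I with I_d = ⋂_{n=0}^∞ D_n. -/
open Set Filter Topology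

/-!
By Urysohn's lemma there are continuous `u_n : I → [0, 1]` vanishing off `D_n` and equal to `1`
on `D_{n+1}`. Take `d_n = u_0 + ⋯ + u_{n-1}`. On `⋂ D_n` every `u_k` is `1`, so `d_n(x) = n → ∞`;
if `x ∉ D_m` then `u_k(x) = 0` for all `k ≥ m`, so `d_n(x)` is eventually constant.
-/

lemma tendsto_sum_range_atTop_iff_mem_iInter {X : Type*} {E : ℕ → Set X} (hE : Antitone E)
    {u : ℕ → X → ℝ} (hu0 : ∀ n, ∀ x ∉ E n, u n x = 0) (hu1 : ∀ n, ∀ x ∈ E (n + 1), u n x = 1)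
    (x : X) : Tendsto (fun n => ∑ k ∈ Finset.range n, u k x) atTop atTop ↔ x ∈ ⋂ n, E n := by
  constructor
  · intro htend
    by_contra hx
    obtain ⟨m, hxm⟩ : ∃ m, x ∉ E m := by simpa using hx
    have hconst : ∀ᶠ n in atTop, ∑ k ∈ Finset.range n, u k x = ∑ k ∈ Finset.range m, u k x :=
      eventually_atTop.2 ⟨m, fun n hn =>
        Finset.eventually_constant_sum (fun k hk => hu0 k x fun h => hxm (hE hk h)) hn⟩
    exact not_tendsto_atTop_of_tendsto_nhds (tendsto_const_nhds.congr' (EventuallyEq.symm hconst))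
      htend
  · intro hx
    have hsum : ∀ n, ∑ k ∈ Finset.range n, u k x = n := fun n => by
      simp [hu1 _ x (mem_iInter.1 hx _)]
    simpa only [hsum] using tendsto_natCast_atTop_atTop

theorem exists_monotone_continuousMap_tendsto_atTop_iff_mem_iInter {X : Type*}
    [TopologicalSpace X] [NormalSpace X] {E : ℕ → Set X} (hclosed : ∀ n, IsClosed (E n))
    (hnested : ∀ n, E (n + 1) ⊆ interior (E n)) :
    ∃ f : ℕ → C(X, ℝ), Monotone f ∧
      ∀ x, Tendsto (fun n => f n x) atTop atTop ↔ x ∈ ⋂ n, E n := by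
  have hanti : Antitone E :=
    antitone_nat_of_succ_le fun n => (hnested n).trans interior_subset
  choose u hu0 hu1 hu01 using fun n =>
    exists_continuous_zero_one_of_isClosed isOpen_interior.isClosed_compl (hclosed (n + 1))
      ((disjoint_compl_left).mono_right (hnested n))
  refine ⟨fun n => ∑ k ∈ Finset.range n, u k, ?_, fun x => ?_⟩
  · refine monotone_nat_of_le_succ fun n x => ?_
    simpa [Finset.sum_range_succ] using (hu01 n x).1
  · simpa using tendsto_sum_range_atTop_iff_mem_iInter hanti
      (fun n x hx => hu0 n fun h => hx (interior_subset h)) (fun n x hx => hu1 n hx) x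

lemma continuousOn_dite_mem {α β : Type*} [TopologicalSpace α] [TopologicalSpace β] {s : Set α}
    [DecidablePred (· ∈ s)] (f : C(s, β)) (g : α → β) :
    ContinuousOn (fun x => if h : x ∈ s then f ⟨x, h⟩ else g x) s := by
  rw [continuousOn_iff_continuous_domRestrict]
  convert f.continuous using 1
  funext x
  simp [x.2]

theorem stmt_5_general (I : Set ℝ)
    (D : ℕ → Set ℝ) (hDI : ∀ n, D n ⊆ I)
    (hclosed : ∀ n, IsClosed ((Subtype.val ⁻¹' D n : Set I)))
    (hnested : ∀ n, (Subtype.val ⁻¹' D (n + 1) : Set I) ⊆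
      interior (Subtype.val ⁻¹' D n : Set I)) :
    ∃ d : ℕ → ℝ → ℝ, (∀ n, ContinuousOn (d n) I) ∧
      (∀ n, ∀ x ∈ I, d n x ≤ d (n + 1) x) ∧ limSet I d = ⋂ n, D n := by
  classical
  obtain ⟨f, hmono, hlim⟩ :=
    exists_monotone_continuousMap_tendsto_atTop_iff_mem_iInter hclosed hnested
  refine ⟨fun n x => if h : x ∈ I then f n ⟨x, h⟩ else 0, fun n => continuousOn_dite_mem _ _,
    fun n x hx => by simpa [hx] using hmono n.le_succ ⟨x, hx⟩, ?_⟩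
  ext x
  constructor
  · rintro ⟨hx, htend⟩
    simpa using (hlim ⟨x, hx⟩).1 (by simpa [hx] using htend)
  · intro hx
    have hxI : x ∈ I := hDI 0 (mem_iInter.1 hx 0)
    exact ⟨hxI, by simpa [hxI] using (hlim ⟨x, hxI⟩).2 (by simpa using hx)⟩

/-- Let `(D_n)` be a sequence of relatively closed subsets of an interval `I` with `D₀ = I`
and `D_{n+1} ⊆ int_I (D_n)` (interior relative to `I`).  Then `⋂ n, D_n ∈ Ω(I)`, i.e.
it equals `I_d` for some nondecreasing sequence of continuous functions on `I`. -/
theorem stmt_5 (I : Set ℝ) (hI : I.OrdConnected) (hInt : I.Nontrivial)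
    (D : ℕ → Set ℝ) (hDI : ∀ n, D n ⊆ I)
    (hclosed : ∀ n, IsClosed ((Subtype.val ⁻¹' D n : Set I)))
    (hD0 : D 0 = I)
    (hnested : ∀ n, (Subtype.val ⁻¹' D (n + 1) : Set I) ⊆
      interior (Subtype.val ⁻¹' D n : Set I)) :
    ∃ d : ℕ → ℝ → ℝ, (∀ n, ContinuousOn (d n) I) ∧
      (∀ n, ∀ x ∈ I, d n x ≤ d (n + 1) x) ∧ limSet I d = ⋂ n, D n :=
  stmt_5_general I D hDI hclosed hnested
end

section
/- Let I ⊆ ℝ be a nondegenerate interval and let X ⊆ I be a set such that λ(X ∩ J) = 0 for some nonempty open interval J ⊆ I, where λ denotes Lebesgue measure. Then there exists a sequence of continuous functions f₁ ≤ f₂ ≤ ⋯ on I which is not a max-family, although I_f ⊇ X. -/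
open Set Filter Topology MeasureTheory

/-!
Pick `[c, d] ⊂ J` and open sets `U k ⊇ X ∩ J` with `λ (U k) < 2⁻ᵏ`. Take
`f n x = n · d(x, [c, d]) + ∑_{k < n} min 1 (n · d(x, (U k)ᶜ))`. Off `[c, d]` the first term
diverges; a point of `X ∩ [c, d]` lies in every `U k`, so each of the `k`-th terms is eventually
`1` and the sum diverges. On `[c, d]` the `k`-th term is at most the indicator of `U k`, so
`∫_c^d f n ≤ ∑ 2⁻ᵏ ≤ 2` for all `n`.
-/

open Metric Finset

section

variable {α : Type*} [PseudoMetricSpace α]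

noncomputable def ramp (U : Set α) (n : ℕ) (x : α) : ℝ :=
  min 1 (n * infDist x Uᶜ)

lemma ramp_nonneg (U : Set α) (n : ℕ) (x : α) : 0 ≤ ramp U n x :=
  le_min zero_le_one (mul_nonneg n.cast_nonneg infDist_nonneg)

lemma continuous_ramp (U : Set α) (n : ℕ) : Continuous (ramp U n) :=
  continuous_const.min (continuous_const.mul (continuous_infDist_pt _))

lemma monotone_ramp (U : Set α) (x : α) : Monotone fun n => ramp U n x := fun _ _ h =>
  min_le_min le_rfl (mul_le_mul_of_nonneg_right (by exact_mod_cast h) infDist_nonneg)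

lemma ramp_le_indicator (U : Set α) (n : ℕ) (x : α) :
    ramp U n x ≤ U.indicator 1 x := by
  by_cases hx : x ∈ U
  · rw [indicator_of_mem hx]; exact min_le_left _ _
  · simp [ramp, hx, infDist_zero_of_mem (mem_compl hx)]

lemma eventually_ramp_eq_one {U : Set α} (hU : IsOpen U) (hUc : Uᶜ.Nonempty) {x : α}
    (hx : x ∈ U) : ∀ᶠ n in atTop, ramp U n x = 1 := by
  have hpos : 0 < infDist x Uᶜ :=
    (hU.isClosed_compl.notMem_iff_infDist_pos hUc).1 (not_not_intro hx)
  filter_upwards [(tendsto_natCast_atTop_atTop.atTop_mul_const hpos).eventually_ge_atTop 1]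
    with n hn using min_eq_left hn

lemma integral_ramp_le {U : Set ℝ} (hU : MeasurableSet U) (hUfin : volume U ≠ ⊤) (n : ℕ)
    {a b : ℝ} (hab : a ≤ b) : ∫ t in a..b, ramp U n t ≤ volume.real U := by
  rw [intervalIntegral.integral_of_le hab]
  calc ∫ t in Ioc a b, ramp U n t ≤ ∫ t in Ioc a b, U.indicator 1 t :=
        setIntegral_mono_on (continuous_ramp U n).integrableOn_Ioc
          ((integrableOn_const measure_Ioc_lt_top.ne).indicator hU) measurableSet_Ioc
          fun t _ => ramp_le_indicator U n t
    _ = volume.real (Ioc a b ∩ U) := by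
        rw [setIntegral_indicator hU]; simp
    _ ≤ volume.real U := measureReal_mono inter_subset_right hUfin

lemma tendsto_sum_range_atTop_of_eventually_one_le {g : ℕ → ℕ → ℝ} (hg : ∀ k n, 0 ≤ g k n)
    (h1 : ∀ k, ∀ᶠ n in atTop, 1 ≤ g k n) :
    Tendsto (fun n => ∑ k ∈ range n, g k n) atTop atTop := by
  refine tendsto_atTop.2 fun M => ?_
  obtain ⟨N, hN⟩ := exists_nat_ge M
  filter_upwards [eventually_ge_atTop N, (eventually_all_finset (range N)).2 fun k _ => h1 k]
    with n hn hone
  calc M ≤ N := hN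
    _ = ∑ k ∈ range N, (1 : ℝ) := by simp
    _ ≤ ∑ k ∈ range N, g k n := sum_le_sum hone
    _ ≤ ∑ k ∈ range n, g k n :=
        sum_le_sum_of_subset_of_nonneg (range_mono hn) fun k _ _ => hg k n

noncomputable def rampSeq (K : Set α) (U : ℕ → Set α) (n : ℕ) (x : α) : ℝ :=
  n * infDist x K + ∑ k ∈ range n, ramp (U k) n x

lemma continuous_rampSeq (K : Set α) (U : ℕ → Set α) (n : ℕ) : Continuous (rampSeq K U n) :=
  (continuous_const.mul (continuous_infDist_pt _)).add
    (continuous_finsetSum _ fun k _ => continuous_ramp (U k) n)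

lemma monotone_rampSeq (K : Set α) (U : ℕ → Set α) (x : α) :
    Monotone fun n => rampSeq K U n x := fun m n hmn => by
  refine add_le_add (mul_le_mul_of_nonneg_right (by exact_mod_cast hmn) infDist_nonneg) ?_
  calc ∑ k ∈ range m, ramp (U k) m x ≤ ∑ k ∈ range m, ramp (U k) n x :=
        sum_le_sum fun k _ => monotone_ramp (U k) x hmn
    _ ≤ ∑ k ∈ range n, ramp (U k) n x :=
        sum_le_sum_of_subset_of_nonneg (range_mono hmn) fun k _ _ => ramp_nonneg _ n x

lemma tendsto_rampSeq_of_notMem {K : Set α} (hK : IsClosed K) (hKne : K.Nonempty)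
    (U : ℕ → Set α) {x : α} (hx : x ∉ K) :
    Tendsto (fun n => rampSeq K U n x) atTop atTop := by
  have hpos : 0 < infDist x K := (hK.notMem_iff_infDist_pos hKne).1 hx
  refine tendsto_atTop_mono (fun n => ?_) (tendsto_natCast_atTop_atTop.atTop_mul_const hpos)
  exact le_add_of_nonneg_right (sum_nonneg fun k _ => ramp_nonneg (U k) n x)

lemma tendsto_rampSeq_of_forall_mem (K : Set α) {U : ℕ → Set α} (hU : ∀ k, IsOpen (U k))
    (hUc : ∀ k, (U k)ᶜ.Nonempty) {x : α} (hx : ∀ k, x ∈ U k) :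
    Tendsto (fun n => rampSeq K U n x) atTop atTop := by
  refine tendsto_atTop_mono
    (fun n => le_add_of_nonneg_left (mul_nonneg n.cast_nonneg infDist_nonneg)) ?_
  exact tendsto_sum_range_atTop_of_eventually_one_le (fun k n => ramp_nonneg (U k) n x)
    fun k => (eventually_ramp_eq_one (hU k) (hUc k) (hx k)).mono fun n hn => hn.ge

lemma integral_rampSeq_le {K : Set ℝ} {U : ℕ → Set ℝ} (hU : ∀ k, MeasurableSet (U k))
    (hUfin : ∀ k, volume (U k) ≠ ⊤) {c d : ℝ} (hcd : c ≤ d) (hK : Icc c d ⊆ K) (n : ℕ) :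
    ∫ t in c..d, rampSeq K U n t ≤ ∑ k ∈ range n, volume.real (U k) := by
  have honK : EqOn (rampSeq K U n) (fun t => ∑ k ∈ range n, ramp (U k) n t) (uIcc c d) :=
    fun t ht => by
      rw [uIcc_of_le hcd] at ht
      simp [rampSeq, infDist_zero_of_mem (hK ht)]
  rw [intervalIntegral.integral_congr honK, intervalIntegral.integral_finsetSum
    fun k _ => (continuous_ramp (U k) n).intervalIntegrable c d]
  exact sum_le_sum fun k _ => integral_ramp_le (hU k) (hUfin k) n hcd

end

theorem stmt_6_general (I : Set ℝ) (X : Set ℝ) (hXI : X ⊆ I)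
    (hJ : ∃ a b : ℝ, a < b ∧ Ioo a b ⊆ I ∧ volume (X ∩ Ioo a b) = 0) :
    ∃ f : ℕ → ℝ → ℝ, (∀ n, ContinuousOn (f n) I) ∧
      (∀ n, ∀ x ∈ I, f n x ≤ f (n + 1) x) ∧
      X ⊆ limSet I f ∧
      ¬ (∀ x ∈ I, ∀ y ∈ I, x < y →
        Tendsto (fun n => ∫ t in x..y, f n t) atTop atTop) := by
  obtain ⟨a, b, hab, hJI, hXJ⟩ := hJ
  obtain ⟨c, hac, hcb⟩ := exists_between hab
  obtain ⟨d, hcd, hdb⟩ := exists_between hcb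
  have hcover : ∀ k : ℕ, ∃ U, X ∩ Ioo a b ⊆ U ∧ IsOpen U ∧
      volume U < ENNReal.ofReal ((1 / 2) ^ k) :=
    fun k => (X ∩ Ioo a b).exists_isOpen_lt_of_lt _ (by rw [hXJ]; simp)
  choose U hXU hUo hUvol using hcover
  have hUc : ∀ k, (U k)ᶜ.Nonempty := fun k => nonempty_compl.2 fun h => by simpa [h] using hUvol k
  refine ⟨rampSeq (Icc c d) U, fun n => (continuous_rampSeq _ U n).continuousOn,
    fun n x _ => monotone_rampSeq _ U x n.le_succ, fun x hx => ⟨hXI hx, ?_⟩, fun h => ?_⟩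
  · by_cases hxK : x ∈ Icc c d
    · exact tendsto_rampSeq_of_forall_mem _ hUo hUc
        fun k => hXU k ⟨hx, hac.trans_le hxK.1, hxK.2.trans_lt hdb⟩
    · exact tendsto_rampSeq_of_notMem isClosed_Icc (nonempty_Icc.2 hcd.le) U hxK
  · have hbdd : ∀ n, ∫ t in c..d, rampSeq (Icc c d) U n t ≤ 2 := fun n => calc
      _ ≤ ∑ k ∈ range n, volume.real (U k) :=
          integral_rampSeq_le (fun k => (hUo k).measurableSet)
            (fun k => (hUvol k).ne_top) hcd.le subset_rfl n
      _ ≤ ∑ k ∈ range n, (1 / 2 : ℝ) ^ k :=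
          sum_le_sum fun k _ => ENNReal.toReal_le_of_le_ofReal (by positivity) (hUvol k).le
      _ ≤ 2 := sum_geometric_two_le n
    have htend := h c (hJI ⟨hac, hcb⟩) d (hJI ⟨hac.trans hcd, hdb⟩) hcd
    obtain ⟨n, hn⟩ := (htend.eventually_gt_atTop 2).exists
    linarith [hbdd n]

/-- If `X ⊆ I` satisfies `λ(X ∩ J) = 0` for some nonempty open interval `J ⊆ I`, then there
is a nondecreasing sequence of continuous functions on `I` which is not a max-family
although `I_f ⊇ X`. -/
theorem stmt_6 (I : Set ℝ) (hI : I.OrdConnected) (hInt : I.Nontrivial)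
    (X : Set ℝ) (hXI : X ⊆ I)
    (hJ : ∃ a b : ℝ, a < b ∧ Ioo a b ⊆ I ∧ volume (X ∩ Ioo a b) = 0) :
    ∃ f : ℕ → ℝ → ℝ, (∀ n, ContinuousOn (f n) I) ∧
      (∀ n, ∀ x ∈ I, f n x ≤ f (n + 1) x) ∧
      X ⊆ limSet I f ∧
      ¬ (∀ x ∈ I, ∀ y ∈ I, x < y →
        Tendsto (fun n => ∫ t in x..y, f n t) atTop atTop) :=
  stmt_6_general I X hXI hJ
end

section
/- Let (f_n : I → ℝ) be a sequence of continuous functions on a nondegenerate interval I ⊆ ℝ with f₁ ≤ f₂ ≤ ⋯ pointwise, and suppose that λ(I_f ∩ U) > 0 for every nonempty open subinterval U of I, where λ denotes Lebesgue measure. Then (f_n) is a max-family, i.e. lim_{n→∞} ∫_x^y f_n(t) dt = +∞ for all x, y ∈ I with x < y. -/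
open Set Filter Topology MeasureTheory

/-- If `(f_n)` is a nondecreasing sequence of continuous functions on `I` such that `I_f`
intersected with every nonempty open subinterval of `I` has positive Lebesgue measure, then
`(f_n)` is a max-family. -/
theorem stmt_7 (I : Set ℝ) (hI : I.OrdConnected) (hInt : I.Nontrivial)
    (f : ℕ → ℝ → ℝ) (hcont : ∀ n, ContinuousOn (f n) I)
    (hmono : ∀ n, ∀ x ∈ I, f n x ≤ f (n + 1) x)
    (hpos : ∀ a b : ℝ, a < b → Ioo a b ⊆ I → 0 < volume (limSet I f ∩ Ioo a b)) :
    ∀ x ∈ I, ∀ y ∈ I, x < y →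
      Tendsto (fun n => ∫ t in x..y, f n t) atTop atTop := by
  intro x hx y hy hxy
  have hIcc : Icc x y ⊆ I := hI.out hx hy
  have hIoc : Ioc x y ⊆ I := fun t ht => hIcc ⟨le_of_lt ht.1, ht.2⟩
  set μ := volume.restrict (Ioc x y) with hμ
  have hmono' : ∀ t ∈ I, Monotone fun n => f n t := fun t ht =>
    monotone_nat_of_le_succ fun n => hmono n t ht
  have hint : ∀ n, IntervalIntegrable (f n) volume x y := by
    intro n
    apply ContinuousOn.intervalIntegrable
    rw [Set.uIcc_of_le hxy.le]
    exact (hcont n).mono hIcc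
  have hintOn : ∀ n, IntegrableOn (f n) (Ioc x y) volume := fun n =>
    (intervalIntegrable_iff_integrableOn_Ioc_of_le hxy.le).1 (hint n)
  set g : ℕ → ℝ → ℝ := fun n t => f n t - f 0 t with hg
  have hgint : ∀ n, Integrable (g n) μ := fun n => (hintOn n).sub (hintOn 0)
  set F : ℕ → ℝ → ENNReal := fun n t => ENNReal.ofReal (g n t) with hF
  have hFae : ∀ n, AEMeasurable (F n) μ :=
    fun n => ENNReal.measurable_ofReal.comp_aemeasurable (hgint n).aemeasurable
  have hmem : ∀ᵐ t ∂μ, t ∈ Ioc x y := ae_restrict_mem measurableSet_Ioc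
  have hFmono : ∀ᵐ t ∂μ, Monotone fun n => F n t := by
    filter_upwards [hmem] with t ht m n hmn
    exact ENNReal.ofReal_le_ofReal (sub_le_sub_right (hmono' t (hIoc ht) hmn) _)
  set L : ℕ → ENNReal := fun n => ∫⁻ t, F n t ∂μ with hL
  have hLmono : Monotone L := fun m n hmn =>
    lintegral_mono_ae (hFmono.mono fun t h => h hmn)
  have hLne : ∀ n, L n ≠ ⊤ := fun n => (hgint n).lintegral_lt_top.ne
  -- the sup of the lintegrals is ⊤
  have hsup : ⨆ n, L n = ⊤ := by
    rw [← lintegral_iSup' hFae hFmono]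
    by_contra h
    have hae : ∀ᵐ t ∂μ, (⨆ n, F n t) < ⊤ := ae_lt_top' (AEMeasurable.iSup hFae) h
    set S := limSet I f ∩ Ioo x y with hS
    have hSsub : S ⊆ Ioc x y := fun t ht => ⟨ht.2.1, ht.2.2.le⟩
    have hSpos : 0 < volume S :=
      hpos x y hxy fun t ht => hIcc ⟨ht.1.le, ht.2.le⟩
    have hμS : 0 < μ S := by
      rwa [hμ, Measure.restrict_apply' measurableSet_Ioc,
        Set.inter_eq_self_of_subset_left hSsub]
    have hStop : ∀ t ∈ S, (⨆ n, F n t) = ⊤ := by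
      intro t ht
      have htend : Tendsto (fun n => f n t) atTop atTop := ht.1.2
      have htend2 : Tendsto (fun n => g n t) atTop atTop :=
        tendsto_atTop_add_const_right _ (-(f 0 t)) htend |>.congr fun n => by
          simp [hg, sub_eq_add_neg]
      rw [iSup_eq_top]
      intro b hb
      have : ∀ᶠ n in atTop, b.toReal < g n t := htend2.eventually_gt_atTop _
      obtain ⟨n, hn⟩ := this.exists
      exact ⟨n, by
        calc b = ENNReal.ofReal b.toReal := (ENNReal.ofReal_toReal hb.ne).symm
        _ < ENNReal.ofReal (g n t) := by
            rw [ENNReal.ofReal_lt_ofReal_iff (lt_of_le_of_lt ENNReal.toReal_nonneg hn)]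
            exact hn⟩
    have h0 : μ {t | ¬ (⨆ n, F n t) < ⊤} = 0 := ae_iff.1 hae
    have : μ S = 0 :=
      measure_mono_null (fun t ht => not_lt.2 (hStop t ht).ge) h0
    exact hμS.ne' this
  -- real integrals
  have hnonneg : ∀ n, 0 ≤ᵐ[μ] g n := by
    intro n
    filter_upwards [hmem] with t ht
    exact sub_nonneg.2 (hmono' t (hIoc ht) (Nat.zero_le n))
  have hkey : ∀ n, ∫ t in x..y, f n t = (∫ t in x..y, f 0 t) + (L n).toReal := by
    intro n
    have h1 : ∫ t in x..y, g n t = (L n).toReal := by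
      rw [intervalIntegral.integral_of_le hxy.le]
      exact integral_eq_lintegral_of_nonneg_ae (hnonneg n) (hgint n).aestronglyMeasurable
    have h2 : ∫ t in x..y, g n t = (∫ t in x..y, f n t) - ∫ t in x..y, f 0 t :=
      intervalIntegral.integral_sub (hint n) (hint 0)
    linarith [h1, h2.symm.trans h1]
  have htoReal : Tendsto (fun n => (L n).toReal) atTop atTop := by
    rw [tendsto_atTop]
    intro b
    have : ∃ N, ENNReal.ofReal b < L N := by
      by_contra hcon
      push_neg at hcon
      have hle : ⨆ n, L n ≤ ENNReal.ofReal b := iSup_le hcon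
      rw [hsup, top_le_iff] at hle
      exact ENNReal.ofReal_ne_top hle
    obtain ⟨N, hN⟩ := this
    filter_upwards [eventually_ge_atTop N] with n hn
    have hle : ENNReal.ofReal b ≤ L n := hN.le.trans (hLmono hn)
    exact (ENNReal.ofReal_le_iff_le_toReal (hLne n)).1 hle
  have hfin := tendsto_atTop_add_const_left _ (∫ t in x..y, f 0 t) htoReal
  exact hfin.congr fun n => (hkey n).symm
end

section
/- For every nondegenerate interval I ⊆ ℝ there exists a max-family (z_n : I → (0, +∞))_{n=1}^∞ such that the Hausdorff dimension of I_z := {x ∈ I : lim_{n→∞} z_n(x) = +∞} is zero. -/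
open Set Filter Topology MeasureTheory

/-!
Let `q` be a dense sequence and `ρ k = 2⁻ᵏ`. The `n`-th function is `1` plus, for `k < n`, the
bump `max 0 (n / (1 + n |x - q k|) - (ρ k)⁻¹)`, which increases with `n`. Its integral from
`q k` to any `y > q k` is at least `log (1 + n (y - q k)) - (ρ k)⁻¹ (y - q k)`, which is
unbounded in `n`, and every interval contains some `q k`. At a point `x ∉ range q` lying in only
finitely many of the balls `closedBall (q k) (ρ k)`, all but finitely many bumps vanish and the
others are bounded by `|x - q k|⁻¹`, so the sequence stays bounded at `x`. Hence `I_z` lies in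
a countable set together with the limsup of these balls, whose `d`-dimensional Hausdorff measure
vanishes for every `d > 0` because `∑ ρ k ^ d < ∞`.
-/

open Metric
open scoped NNReal ENNReal

section LimsupBalls

variable {X : Type*} [EMetricSpace X] [MeasurableSpace X] [BorelSpace X]

theorem hausdorffMeasure_limsup_closedEBall_eq_zero (c : ℕ → X) {r : ℕ → ℝ≥0∞} {d : ℝ}
    (hd : 0 < d) (hr : ∑' k, r k ^ d ≠ ∞) :
    μH[d] (limsup (fun k => closedEBall (c k) (r k)) atTop) = 0 := by
  set tail : ℕ → ℝ≥0∞ := fun M => ∑' i, r (i + M) ^ d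
  have htail : Tendsto tail atTop (𝓝 0) := ENNReal.tendsto_sum_nat_add _ hr
  have hr_le : ∀ M i, r (i + M) ≤ tail M ^ d⁻¹ := fun M i =>
    calc r (i + M) = (r (i + M) ^ d) ^ d⁻¹ := (ENNReal.rpow_rpow_inv hd.ne' _).symm
      _ ≤ tail M ^ d⁻¹ := by
        gcongr
        exact ENNReal.le_tsum (f := fun i => r (i + M) ^ d) i
  have hmesh : Tendsto (fun M => 2 * tail M ^ d⁻¹) atTop (𝓝 0) := by
    have := ((ENNReal.continuous_rpow_const (y := d⁻¹)).tendsto 0).comp htail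
    simpa [ENNReal.zero_rpow_of_pos (inv_pos.2 hd)] using
      ENNReal.Tendsto.const_mul this (Or.inr ENNReal.ofNat_ne_top)
  have hcover : ∀ M, limsup (fun k => closedEBall (c k) (r k)) atTop ⊆
      ⋃ i, closedEBall (c (i + M)) (r (i + M)) := fun M x hx => by
    obtain ⟨k, hMk, hxk⟩ := frequently_atTop.1 (mem_limsup_iff_frequently_mem.1 hx) M
    exact mem_iUnion.2 ⟨k - M, by rwa [Nat.sub_add_cancel hMk]⟩
  refine le_antisymm ?_ zero_le
  calc μH[d] (limsup (fun k => closedEBall (c k) (r k)) atTop)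
      ≤ liminf (fun M => ∑' i, ediam (closedEBall (c (i + M)) (r (i + M))) ^ d) atTop :=
        Measure.hausdorffMeasure_le_liminf_tsum d _ _ hmesh _
          (Eventually.of_forall fun M i => ediam_closedEBall_le.trans (by gcongr; exact hr_le M i))
          (Eventually.of_forall hcover)
    _ ≤ liminf (fun M => 2 ^ d * tail M) atTop := by
        refine liminf_le_liminf (Eventually.of_forall fun M => ?_)
        calc ∑' i, ediam (closedEBall (c (i + M)) (r (i + M))) ^ d
            ≤ ∑' i, (2 * r (i + M)) ^ d := by gcongr; exact ediam_closedEBall_le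
          _ = 2 ^ d * tail M := by
            simp only [ENNReal.mul_rpow_of_nonneg _ _ hd.le, ENNReal.tsum_mul_left, tail]
    _ = 0 := by
        simpa using (ENNReal.Tendsto.const_mul htail
          (Or.inr (ENNReal.rpow_ne_top_of_nonneg hd.le ENNReal.ofNat_ne_top))).liminf_eq

theorem dimH_limsup_closedEBall_eq_zero (c : ℕ → X) {r : ℕ → ℝ≥0∞}
    (hr : ∀ d : ℝ, 0 < d → ∑' k, r k ^ d ≠ ∞) :
    dimH (limsup (fun k => closedEBall (c k) (r k)) atTop) = 0 := by
  refine nonpos_iff_eq_zero.1 (dimH_le fun d hd => ?_)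
  by_contra! hd_pos
  have hd_pos' : (0 : ℝ) < d := by exact_mod_cast hd_pos
  exact ENNReal.zero_ne_top
    (hausdorffMeasure_limsup_closedEBall_eq_zero c hd_pos' (hr d hd_pos') ▸ hd)

end LimsupBalls

theorem tsum_rpow_ne_top_of_le_pow {r : ℕ → ℝ≥0∞} {a : ℝ≥0∞} (ha : a < 1)
    (hr : ∀ k, r k ≤ a ^ k) {d : ℝ} (hd : 0 < d) : ∑' k, r k ^ d ≠ ∞ := by
  refine ne_top_of_le_ne_top (tsum_geometric_lt_top.2 (ENNReal.rpow_lt_one ha hd)).ne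
    (ENNReal.tsum_le_tsum fun k => ?_)
  calc r k ^ d ≤ (a ^ k) ^ d := by gcongr; exact hr k
    _ = (a ^ d) ^ k := by
      rw [← ENNReal.rpow_natCast, ← ENNReal.rpow_natCast, ← ENNReal.rpow_mul,
        ← ENNReal.rpow_mul, mul_comm]

noncomputable def approxInvAbs (s t : ℝ) : ℝ := s / (1 + s * |t|)

section ApproxInvAbs

variable {s s' t : ℝ}

theorem one_add_mul_abs_pos (hs : 0 ≤ s) (t : ℝ) : 0 < 1 + s * |t| := by positivity

theorem approxInvAbs_le_approxInvAbs (hs : 0 ≤ s) (hss' : s ≤ s') (t : ℝ) :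
    approxInvAbs s t ≤ approxInvAbs s' t := by
  rw [approxInvAbs, approxInvAbs, div_le_div_iff₀ (one_add_mul_abs_pos hs t)
    (one_add_mul_abs_pos (hs.trans hss') t)]
  nlinarith

theorem approxInvAbs_le_inv_abs (hs : 0 ≤ s) (ht : t ≠ 0) : approxInvAbs s t ≤ |t|⁻¹ := by
  have ht' : 0 < |t| := abs_pos.2 ht
  rw [approxInvAbs, div_le_iff₀ (one_add_mul_abs_pos hs t), inv_mul_eq_div, le_div_iff₀ ht']
  nlinarith

theorem continuous_approxInvAbs (hs : 0 ≤ s) : Continuous (approxInvAbs s) :=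
  continuous_const.div (by fun_prop) fun t => (one_add_mul_abs_pos hs t).ne'

theorem integral_approxInvAbs (hs : 0 ≤ s) {a : ℝ} (ha : 0 ≤ a) :
    ∫ t in (0)..a, approxInvAbs s t = Real.log (1 + s * a) := by
  have hderiv : ∀ t ∈ uIcc 0 a,
      HasDerivAt (fun t => Real.log (1 + s * t)) (approxInvAbs s t) t := fun t ht => by
    rw [uIcc_of_le ha] at ht
    have hpos : 0 < 1 + s * t := by simpa [abs_of_nonneg ht.1] using one_add_mul_abs_pos hs t
    simpa [approxInvAbs, abs_of_nonneg ht.1] using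
      (((hasDerivAt_id t).const_mul s).const_add 1).log hpos.ne'
  rw [intervalIntegral.integral_eq_sub_of_hasDerivAt hderiv
    ((continuous_approxInvAbs hs).intervalIntegrable 0 a)]
  simp

theorem tendsto_log_one_add_mul_sub_atTop {a : ℝ} (ha : 0 < a) (b : ℝ) :
    Tendsto (fun n : ℕ => Real.log (1 + n * a) - b) atTop atTop :=
  tendsto_atTop_add_const_right _ _ <| Real.tendsto_log_atTop.comp <|
    tendsto_atTop_add_const_left _ _ <| tendsto_natCast_atTop_atTop.atTop_mul_const ha

end ApproxInvAbs

noncomputable def bump (c ρ s x : ℝ) : ℝ := max 0 (approxInvAbs s (x - c) - ρ⁻¹)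

section Bump

variable {c ρ s x : ℝ}

theorem bump_nonneg : 0 ≤ bump c ρ s x := le_max_left _ _

theorem bump_le_bump (hs : 0 ≤ s) {s' : ℝ} (hss' : s ≤ s') : bump c ρ s x ≤ bump c ρ s' x :=
  max_le_max le_rfl (sub_le_sub_right (approxInvAbs_le_approxInvAbs hs hss' _) _)

theorem continuous_bump (hs : 0 ≤ s) : Continuous (bump c ρ s) :=
  continuous_const.max (((continuous_approxInvAbs hs).comp (continuous_sub_right c)).sub
    continuous_const)

theorem bump_le_inv_abs (hρ : 0 ≤ ρ) (hs : 0 ≤ s) (hx : x ≠ c) : bump c ρ s x ≤ |x - c|⁻¹ :=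
  max_le (by positivity) ((sub_le_self _ (inv_nonneg.2 hρ)).trans
    (approxInvAbs_le_inv_abs hs (sub_ne_zero.2 hx)))

theorem bump_eq_zero (hρ : 0 < ρ) (hs : 0 ≤ s) (hx : ρ ≤ |x - c|) : bump c ρ s x = 0 := by
  have hxc : x - c ≠ 0 := abs_pos.1 (hρ.trans_le hx)
  refine max_eq_left (sub_nonpos.2 ?_)
  exact (approxInvAbs_le_inv_abs hs hxc).trans (inv_anti₀ hρ hx)

theorem log_sub_le_integral_bump (hs : 0 ≤ s) {y : ℝ} (hcy : c ≤ y) :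
    Real.log (1 + s * (y - c)) - ρ⁻¹ * (y - c) ≤ ∫ t in c..y, bump c ρ s t := by
  have hint : IntervalIntegrable (fun t => approxInvAbs s (t - c)) volume c y :=
    ((continuous_approxInvAbs hs).comp (continuous_sub_right c)).intervalIntegrable c y
  calc Real.log (1 + s * (y - c)) - ρ⁻¹ * (y - c)
      = ∫ t in c..y, (approxInvAbs s (t - c) - ρ⁻¹) := by
        rw [intervalIntegral.integral_sub hint intervalIntegrable_const,
          intervalIntegral.integral_comp_sub_right (approxInvAbs s), sub_self,
          integral_approxInvAbs hs (sub_nonneg.2 hcy), intervalIntegral.integral_const,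
          smul_eq_mul]
        ring
    _ ≤ ∫ t in c..y, bump c ρ s t :=
        intervalIntegral.integral_mono_on hcy (hint.sub intervalIntegrable_const)
          ((continuous_bump hs).intervalIntegrable c y) fun t _ => le_max_right _ _

end Bump

noncomputable def zFamily (q ρ : ℕ → ℝ) (n : ℕ) (x : ℝ) : ℝ :=
  1 + ∑ k ∈ Finset.range n, bump (q k) (ρ k) n x

section ZFamily

variable {q ρ : ℕ → ℝ}

theorem zFamily_pos (n : ℕ) (x : ℝ) : 0 < zFamily q ρ n x :=
  add_pos_of_pos_of_nonneg one_pos (Finset.sum_nonneg fun _ _ => bump_nonneg)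

theorem continuous_zFamily (n : ℕ) : Continuous (zFamily q ρ n) :=
  continuous_const.add (continuous_finsetSum _ fun _ _ => continuous_bump n.cast_nonneg)

theorem zFamily_le_succ (n : ℕ) (x : ℝ) : zFamily q ρ n x ≤ zFamily q ρ (n + 1) x := by
  refine add_le_add_right ?_ 1
  calc ∑ k ∈ Finset.range n, bump (q k) (ρ k) n x
      ≤ ∑ k ∈ Finset.range n, bump (q k) (ρ k) (n + 1 : ℕ) x :=
        Finset.sum_le_sum fun _ _ => bump_le_bump n.cast_nonneg (by simp)
    _ ≤ ∑ k ∈ Finset.range (n + 1), bump (q k) (ρ k) (n + 1 : ℕ) x :=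
        Finset.sum_le_sum_of_subset_of_nonneg (Finset.range_subset_range.2 n.le_succ)
          fun _ _ _ => bump_nonneg

theorem bump_le_zFamily {k n : ℕ} (hkn : k < n) (x : ℝ) :
    bump (q k) (ρ k) n x ≤ zFamily q ρ n x :=
  (Finset.single_le_sum (fun _ _ => bump_nonneg) (Finset.mem_range.2 hkn)).trans
    (le_add_of_nonneg_left zero_le_one)

theorem tendsto_integral_zFamily (hq : DenseRange q) {x y : ℝ} (hxy : x < y) :
    Tendsto (fun n => ∫ t in x..y, zFamily q ρ n t) atTop atTop := by
  obtain ⟨k, hk⟩ := hq.exists_mem_open isOpen_Ioo (nonempty_Ioo.2 hxy)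
  have hc : 0 < y - q k := sub_pos.2 hk.2
  refine tendsto_atTop_mono' _ ?_ (tendsto_log_one_add_mul_sub_atTop hc ((ρ k)⁻¹ * (y - q k)))
  filter_upwards [eventually_gt_atTop k] with n hkn
  have hint : ∀ a b, IntervalIntegrable (bump (q k) (ρ k) n) volume a b :=
    (continuous_bump n.cast_nonneg).intervalIntegrable
  calc Real.log (1 + n * (y - q k)) - (ρ k)⁻¹ * (y - q k)
      ≤ ∫ t in q k..y, bump (q k) (ρ k) n t := log_sub_le_integral_bump n.cast_nonneg hk.2.le
    _ ≤ ∫ t in x..y, bump (q k) (ρ k) n t := by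
        rw [← intervalIntegral.integral_add_adjacent_intervals (hint x (q k)) (hint (q k) y)]
        exact le_add_of_nonneg_left
          (intervalIntegral.integral_nonneg hk.1.le fun _ _ => bump_nonneg)
    _ ≤ ∫ t in x..y, zFamily q ρ n t :=
        intervalIntegral.integral_mono_on hxy.le (hint x y)
          ((continuous_zFamily n).intervalIntegrable x y) fun t _ => bump_le_zFamily hkn t

theorem isMaxFamily_zFamily (hq : DenseRange q) (I : Set ℝ) : IsMaxFamily I (zFamily q ρ) :=
  ⟨fun n => (continuous_zFamily n).continuousOn, fun n x _ => zFamily_le_succ n x,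
    fun _ _ _ _ hxy => tendsto_integral_zFamily hq hxy⟩

theorem zFamily_le_of_forall_le_abs_sub (hρ : ∀ k, 0 < ρ k) {x : ℝ} (hx : x ∉ range q) {M : ℕ}
    (hM : ∀ k, M ≤ k → ρ k ≤ |x - q k|) (n : ℕ) :
    zFamily q ρ n x ≤ 1 + ∑ k ∈ Finset.range M, |x - q k|⁻¹ := by
  refine add_le_add_right ?_ 1
  calc ∑ k ∈ Finset.range n, bump (q k) (ρ k) n x
      ≤ ∑ k ∈ Finset.range (max n M), bump (q k) (ρ k) n x :=
        Finset.sum_le_sum_of_subset_of_nonneg (Finset.range_subset_range.2 (le_max_left _ _))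
          fun _ _ _ => bump_nonneg
    _ = ∑ k ∈ Finset.range M, bump (q k) (ρ k) n x := by
        refine (Finset.sum_subset (Finset.range_subset_range.2 (le_max_right _ _)) ?_).symm
        intro k _ hkM
        exact bump_eq_zero (hρ k) n.cast_nonneg (hM k (not_lt.1 (Finset.mem_range.not.1 hkM)))
    _ ≤ ∑ k ∈ Finset.range M, |x - q k|⁻¹ :=
        Finset.sum_le_sum fun k _ =>
          bump_le_inv_abs (hρ k).le n.cast_nonneg fun h => hx ⟨k, h.symm⟩

theorem setOf_tendsto_zFamily_subset (hρ : ∀ k, 0 < ρ k) :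
    {x | Tendsto (fun n => zFamily q ρ n x) atTop atTop} ⊆
      range q ∪ limsup (fun k => closedBall (q k) (ρ k)) atTop := by
  intro x hx
  by_contra! hxq
  rw [mem_union, not_or, mem_limsup_iff_frequently_mem, not_frequently] at hxq
  obtain ⟨M, hM⟩ := eventually_atTop.1 hxq.2
  have hbdd := zFamily_le_of_forall_le_abs_sub hρ hxq.1 (M := M)
    (fun k hk => by simpa [dist_eq_norm] using (not_le.1 (hM k hk)).le)
  obtain ⟨n, hn⟩ := (hx.eventually_gt_atTop (1 + ∑ k ∈ Finset.range M, |x - q k|⁻¹)).exists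
  exact (hbdd n).not_gt hn

end ZFamily

theorem stmt_8_general (I : Set ℝ) :
    ∃ z : ℕ → ℝ → ℝ, (∀ n, ∀ x ∈ I, 0 < z n x) ∧ IsMaxFamily I z ∧
      dimH (limSet I z) = 0 := by
  set q := TopologicalSpace.denseSeq ℝ
  set ρ : ℕ → ℝ := fun k => 2⁻¹ ^ k
  have hρ : ∀ k, 0 < ρ k := fun k => by positivity
  have hdim : dimH (limsup (fun k => closedBall (q k) (ρ k)) atTop) = 0 := by
    simp_rw [← closedEBall_ofReal (hρ _).le]
    refine dimH_limsup_closedEBall_eq_zero q fun d hd =>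
      tsum_rpow_ne_top_of_le_pow ENNReal.one_half_lt_one (fun k => ?_) hd
    simp [ρ, ENNReal.ofReal_pow, ENNReal.ofReal_inv_of_pos, ENNReal.inv_pow]
  refine ⟨zFamily q ρ, fun n x _ => zFamily_pos n x,
    isMaxFamily_zFamily (TopologicalSpace.denseRange_denseSeq ℝ) I, ?_⟩
  refine nonpos_iff_eq_zero.1
    ((dimH_mono fun x hx => setOf_tendsto_zFamily_subset hρ hx.2).trans ?_)
  rw [dimH_union, dimH_countable (countable_range q), hdim, max_self]

/-- For every nondegenerate interval `I` there is a positive-valued max-family `(z_n)`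
with `dim_H I_z = 0`. -/
theorem stmt_8 (I : Set ℝ) (hI : I.OrdConnected) (hInt : I.Nontrivial) :
    ∃ z : ℕ → ℝ → ℝ, (∀ n, ∀ x ∈ I, 0 < z n x) ∧ IsMaxFamily I z ∧
      dimH (limSet I z) = 0 :=
  stmt_8_general I
end

section
/- Let f₁, …, f_n : ℝ^d → ℝ^d be similarities with contraction ratios c₁, …, c_n ∈ (0,1) (i.e. dist(f_i(x), f_i(y)) = c_i · dist(x, y) for all x, y) satisfying the open set condition: there exists a nonempty bounded open set V with ⋃_{i=1}^n f_i(V) ⊆ V and f_i(V) ∩ f_j(V) = ∅ for i ≠ j. If A is a nonempty compact set with A = f₁(A) ∪ ⋯ ∪ f_n(A), then dim_H A = s, where s is the unique real number satisfying ∑_{i=1}^n c_i^s = 1. -/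
/-!
Upper bound: the images of `A` under the compositions `f_w = f_{w₁} ∘ ⋯ ∘ f_{w_k}` along the
words of length `k` cover `A`, have diameters at most `r_w · diam A` with `r_w = c_{w₁} ⋯ c_{w_k}`,
and `∑_{|w| = k} r_w ^ s = (∑ cᵢ ^ s) ^ k = 1`; hence `μH[s] A ≤ (diam A) ^ s < ∞`.

Lower bound: by compactness of `A` it suffices to bound `∑ ρ_m ^ s` from below for finite covers
of `A` by sets `U_m` of diameter at most `ρ_m`. Stopping a long word at its first prefix `w`
with `r_w ≤ ρ_m`, where `U_m` meets `f_w(A)`, produces a set of words through which every long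
word passes, and such a set has `∑ r_w ^ s ≥ 1` because `∑ cᵢ ^ s = 1`. By the open set condition
the sets `f_w(V)` of the words stopped at the same scale `ρ` are disjoint; each contains a ball of
radius `≍ ρ`, and those meeting a set of diameter `ρ` lie in a ball of radius `≍ ρ`, so comparing
`μH[d]`-volumes shows that only boundedly many of them meet each `U_m`. Thus `∑ ρ_m ^ s ≳ 1`,
and `μH[s] A > 0`.
-/

open Set Filter Function MeasureTheory Metric Bornology
open scoped NNReal ENNReal Finset

theorem exists_forall_le_lt_one {ι : Type*} [Finite ι] {c : ι → ℝ} (hc0 : ∀ i, 0 ≤ c i)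
    (hc1 : ∀ i, c i < 1) : ∃ b, 0 ≤ b ∧ b < 1 ∧ ∀ i, c i ≤ b := by
  cases isEmpty_or_nonempty ι
  · exact ⟨0, le_rfl, zero_lt_one, isEmptyElim⟩
  · obtain ⟨i₀, hi₀⟩ := Finite.exists_max c
    exact ⟨c i₀, hc0 i₀, hc1 i₀, hi₀⟩

theorem nonneg_of_sum_rpow_eq_one {ι : Type*} [Fintype ι] {c : ι → ℝ} {s : ℝ}
    (hc : ∀ i, c i ∈ Ioo 0 1) (hs : ∑ i, c i ^ s = 1) : 0 ≤ s := by
  obtain ⟨i⟩ : Nonempty ι := by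
    by_contra h
    norm_num [not_nonempty_iff.1 h] at hs
  by_contra! h
  have hle := Finset.single_le_sum (fun j _ => Real.rpow_nonneg (hc j).1.le s) (Finset.mem_univ i)
  exact (Real.one_lt_rpow_of_pos_of_lt_one_of_neg (hc i).1 (hc i).2 h).not_ge (hle.trans_eq hs)

theorem exists_two_mul_rpow_le {s : ℝ} (hs : 0 < s) {η : ℝ≥0} (hη : 0 < η) :
    ∃ δ : ℝ≥0, 0 < δ ∧ 2 * (δ : ℝ≥0∞) < 2⁻¹ ∧ (2 * (δ : ℝ≥0∞)) ^ s ≤ η := by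
  set δ : ℝ≥0 := min 8⁻¹ (η ^ s⁻¹ / 2)
  have h1 : 2 * δ < 2⁻¹ := calc
    2 * δ ≤ 2 * 8⁻¹ := by gcongr; exact min_le_left _ _
    _ < 2⁻¹ := by norm_num
  have h2 : (2 * δ) ^ s ≤ η := calc
    (2 * δ) ^ s ≤ (η ^ s⁻¹) ^ s := by
      gcongr
      calc 2 * δ ≤ 2 * (η ^ s⁻¹ / 2) := by gcongr; exact min_le_right _ _
        _ = η ^ s⁻¹ := mul_div_cancel₀ _ two_ne_zero
    _ = η := NNReal.rpow_inv_rpow hs.ne' η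
  refine ⟨δ, by positivity, ?_, ?_⟩
  · rw [← ENNReal.coe_inv_two]; exact_mod_cast h1
  · rw [← ENNReal.coe_ofNat, ← ENNReal.coe_mul, ← ENNReal.coe_rpow_of_nonneg _ hs.le]
    exact_mod_cast h2

theorem card_mul_le_measure_of_pairwiseDisjoint {α β : Type*} [MeasurableSpace α] (μ : Measure α)
    {S : Finset β} {B : β → Set α} {K : Set α} {a : ℝ≥0∞} (hd : (S : Set β).PairwiseDisjoint B)
    (hm : ∀ w ∈ S, MeasurableSet (B w)) (ha : ∀ w ∈ S, a ≤ μ (B w)) (hK : ∀ w ∈ S, B w ⊆ K) :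
    #S * a ≤ μ K := calc
  #S * a = ∑ _w ∈ S, a := by simp
  _ ≤ ∑ w ∈ S, μ (B w) := Finset.sum_le_sum ha
  _ = μ (⋃ w ∈ S, B w) := (measure_biUnion_finset hd hm).symm
  _ ≤ μ K := measure_mono (iUnion₂_subset hK)

theorem le_hausdorffMeasure_image_of_dist_eq {X Y : Type*} [MetricSpace X] [MetricSpace Y]
    [MeasurableSpace X] [BorelSpace X] [MeasurableSpace Y] [BorelSpace Y] {g : X → Y} {r : ℝ}
    (hr : 0 < r) (hg : ∀ x y, dist (g x) (g y) = r * dist x y) {d : ℝ} (hd : 0 ≤ d)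
    (S : Set X) : ENNReal.ofReal r ^ d * μH[d] S ≤ μH[d] (g '' S) := by
  have hanti : AntilipschitzWith (r⁻¹).toNNReal g := .of_le_mul_dist fun x y => by
    rw [hg, Real.coe_toNNReal _ (inv_nonneg.2 hr.le), inv_mul_cancel_left₀ hr.ne']
  calc ENNReal.ofReal r ^ d * μH[d] S
      ≤ ENNReal.ofReal r ^ d * (ENNReal.ofReal r⁻¹ ^ d * μH[d] (g '' S)) :=
        mul_le_mul_right (hanti.le_hausdorffMeasure_image hd S) _
    _ = μH[d] (g '' S) := by
        rw [← mul_assoc, ← ENNReal.mul_rpow_of_nonneg _ _ hd, ← ENNReal.ofReal_mul hr.le,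
          mul_inv_cancel₀ hr.ne', ENNReal.ofReal_one, ENNReal.one_rpow, one_mul]

section FiniteDimensional

variable {E : Type*} [NormedAddCommGroup E] [NormedSpace ℝ E] [FiniteDimensional ℝ E]
  [MeasurableSpace E] [BorelSpace E]

theorem card_le_of_pairwiseDisjoint_image_closedBall {κ : Type*} {S : Finset κ}
    {g : κ → E → E} {r : κ → ℝ} {a R r₀ : ℝ} {x₀ x : E} (ha : 0 < a) (hr₀ : 0 < r₀)
    (hR : 0 ≤ R) (hg : ∀ k ∈ S, ∀ y z, dist (g k y) (g k z) = r k * dist y z)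
    (hr : ∀ k ∈ S, a ≤ r k) (hd : (S : Set κ).PairwiseDisjoint fun k => g k '' closedBall x₀ r₀)
    (hsub : ∀ k ∈ S, g k '' closedBall x₀ r₀ ⊆ closedBall x R) :
    (#S : ℝ) ≤ (R / (a * r₀)) ^ Module.finrank ℝ E := by
  set n := Module.finrank ℝ E
  -- `μH[n]` is an additive Haar measure on `E` that scales by `r ^ n` under similarities of
  -- ratio `r`, so it can be compared both with balls and with their similar images.
  set μ : Measure E := μH[n]
  have hβ0 : μ (closedBall 0 1) ≠ 0 := (measure_closedBall_pos μ 0 one_pos).ne'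
  have hβ : μ (closedBall 0 1) ≠ ⊤ := measure_closedBall_lt_top.ne
  have hrk (k : κ) (hk : k ∈ S) : 0 < r k := ha.trans_le (hr k hk)
  have hmeas (k : κ) (hk : k ∈ S) : MeasurableSet (g k '' closedBall x₀ r₀) := by
    have : LipschitzWith (r k).toNNReal (g k) := .of_dist_le_mul fun y z => by
      rw [hg k hk, Real.coe_toNNReal _ (hrk k hk).le]
    exact ((isCompact_closedBall x₀ r₀).image this.continuous).isClosed.measurableSet
  have hlower (k : κ) (hk : k ∈ S) :
      ENNReal.ofReal ((a * r₀) ^ n) * μ (closedBall 0 1) ≤ μ (g k '' closedBall x₀ r₀) := by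
    refine le_trans ?_ (le_hausdorffMeasure_image_of_dist_eq (hrk k hk) (hg k hk)
      n.cast_nonneg _)
    rw [Measure.addHaar_closedBall' μ x₀ hr₀.le, ENNReal.rpow_natCast,
      ← ENNReal.ofReal_pow (hrk k hk).le, ← mul_assoc,
      ← ENNReal.ofReal_mul (pow_nonneg (hrk k hk).le n), ← mul_pow]
    gcongr
    exact hr k hk
  have hpack := card_mul_le_measure_of_pairwiseDisjoint μ hd hmeas hlower hsub
  rw [Measure.addHaar_closedBall' μ x hR, ← mul_assoc, ENNReal.mul_le_mul_iff_left hβ0 hβ,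
    ← ENNReal.ofReal_natCast, ← ENNReal.ofReal_mul (by positivity),
    ENNReal.ofReal_le_ofReal_iff (by positivity)] at hpack
  rwa [div_pow, le_div_iff₀ (by positivity)]

end FiniteDimensional

section CoverLowerBound

variable {X : Type*} [EMetricSpace X]

def CoverLowerBound (K : Set X) (s : ℝ) (C : ℝ≥0) : Prop :=
  ∀ (F : Finset ℕ) (U : ℕ → Set X) (ρ : ℕ → ℝ≥0∞), K ⊆ ⋃ m ∈ F, U m →
    (∀ m ∈ F, ediam (U m) ≤ ρ m ∧ 0 < ρ m ∧ ρ m < 1) → 1 ≤ C * ∑ m ∈ F, ρ m ^ s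

theorem coverLowerBound_of_real {K : Set X} {s C : ℝ} (hs : 0 ≤ s)
    (h : ∀ (F : Finset ℕ) (U : ℕ → Set X) (ρ : ℕ → ℝ), K ⊆ ⋃ m ∈ F, U m →
      (∀ m ∈ F, ediam (U m) ≤ ENNReal.ofReal (ρ m) ∧ 0 < ρ m ∧ ρ m < 1) →
      1 ≤ C * ∑ m ∈ F, ρ m ^ s) :
    CoverLowerBound K s C.toNNReal := by
  intro F U ρ hKU hρ
  have hreal := h F U (fun m => (ρ m).toReal) hKU fun m hm => by
    obtain ⟨hUρ, hρ0, hρ1⟩ := hρ m hm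
    refine ⟨(ENNReal.ofReal_toReal hρ1.ne_top).symm ▸ hUρ, ENNReal.toReal_pos hρ0.ne' hρ1.ne_top,
      ENNReal.toReal_lt_of_lt_ofReal (by simpa)⟩
  calc (1 : ℝ≥0∞) ≤ ENNReal.ofReal (C * ∑ m ∈ F, (ρ m).toReal ^ s) := by simpa using hreal
    _ = C.toNNReal * ∑ m ∈ F, ρ m ^ s := by
      rw [ENNReal.ofReal_mul' (Finset.sum_nonneg fun m _ => by positivity),
        ENNReal.ofReal_sum_of_nonneg fun m _ => by positivity]
      refine congrArg _ (Finset.sum_congr rfl fun m hm => ?_)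
      rw [← ENNReal.ofReal_rpow_of_nonneg ENNReal.toReal_nonneg hs,
        ENNReal.ofReal_toReal (hρ m hm).2.2.ne_top]

theorem CoverLowerBound.one_le_mul_tsum {K : Set X} {s : ℝ} {C : ℝ≥0}
    (h : CoverLowerBound K s C) (hK : IsCompact K) (hs : 0 < s) {t : ℕ → Set X}
    (hKt : K ⊆ ⋃ m, t m) (ht : ∀ m, ediam (t m) ≤ 2⁻¹) (ε : ℝ≥0) (hε : 0 < ε) :
    1 ≤ C * 2 ^ s * ((∑' m, ⨆ _ : (t m).Nonempty, ediam (t m) ^ s) + ε) := by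
  -- Thickening `t m` by `δ m` makes the cover open at a total `s`-cost of at most `ε`.
  obtain ⟨η, hη0, hη⟩ := ENNReal.exists_pos_sum_of_countable (ENNReal.coe_ne_zero.2 hε.ne') ℕ
  choose δ hδ0 hδ1 hδη using fun m => exists_two_mul_rpow_le hs (hη0 m)
  obtain ⟨F, hF⟩ := hK.elim_finite_subcover (fun m => thickening (δ m) (t m))
    (fun m => isOpen_thickening)
    (hKt.trans (iUnion_mono fun m => self_subset_thickening (NNReal.coe_pos.2 (hδ0 m)) _))
  have hcover := h F _ (fun m => ediam (t m) + 2 * δ m) hF fun m _ =>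
    ⟨ediam_thickening_le _, by simpa using Or.inr (hδ0 m),
      (ENNReal.add_lt_add_of_le_of_lt (ne_top_of_le_ne_top (by simp) (ht m)) (ht m)
        (hδ1 m)).trans_eq ENNReal.inv_two_add_inv_two⟩
  have hdiam (m : ℕ) : ediam (t m) ^ s ≤ ⨆ _ : (t m).Nonempty, ediam (t m) ^ s := by
    rcases (t m).eq_empty_or_nonempty with he | hne
    · simp [he, ENNReal.zero_rpow_of_pos hs]
    · exact le_iSup_of_le hne le_rfl
  calc 1 ≤ C * ∑ m ∈ F, (ediam (t m) + 2 * δ m) ^ s := hcover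
    _ ≤ C * ∑ m ∈ F, 2 ^ s * (ediam (t m) ^ s + (2 * δ m) ^ s) := by
        gcongr with m
        exact ENNReal.add_rpow_le_two_rpow_mul_rpow_add_rpow _ _ hs.le
    _ = C * 2 ^ s * (∑ m ∈ F, ediam (t m) ^ s + ∑ m ∈ F, (2 * (δ m : ℝ≥0∞)) ^ s) := by
        rw [← Finset.mul_sum, Finset.sum_add_distrib, mul_assoc]
    _ ≤ C * 2 ^ s * ((∑' m, ⨆ _ : (t m).Nonempty, ediam (t m) ^ s) + ε) := by
        gcongr
        · exact (Finset.sum_le_sum fun m _ => hdiam m).trans (ENNReal.sum_le_tsum F)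
        · exact ((Finset.sum_le_sum fun m _ => hδη m).trans (ENNReal.sum_le_tsum F)).trans hη.le

theorem CoverLowerBound.hausdorffMeasure_ne_zero [MeasurableSpace X] [BorelSpace X] {K : Set X}
    {s : ℝ} {C : ℝ≥0} (h : CoverLowerBound K s C) (hK : IsCompact K) (hs : 0 < s) :
    μH[s] K ≠ 0 := by
  have hfin : (C * 2 ^ s : ℝ≥0∞) ≠ ⊤ :=
    ENNReal.mul_ne_top ENNReal.coe_ne_top (ENNReal.rpow_ne_top_of_nonneg hs.le (by simp))
  refine ((ENNReal.inv_pos.2 hfin).trans_le ?_).ne'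
  rw [Measure.hausdorffMeasure_apply]
  refine le_iSup₂_of_le 2⁻¹ (by simp) (le_iInf₂ fun t hKt => le_iInf fun ht => ?_)
  refine ENNReal.le_of_forall_pos_le_add fun ε hε _ => ?_
  have hle := h.one_le_mul_tsum hK hs hKt ht ε hε
  have hC : (C * 2 ^ s : ℝ≥0∞) ≠ 0 := by
    rintro h0
    simp [h0] at hle
  exact (ENNReal.inv_le_iff_le_mul (fun _ => hC) (absurd · hfin)).2 hle

end CoverLowerBound

namespace SelfSimilar

variable {ι X : Type*}

def wordMap (f : ι → X → X) (w : List ι) : X → X :=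
  w.foldr (fun i g => f i ∘ g) id

def wordRatio (c : ι → ℝ) (w : List ι) : ℝ :=
  (w.map c).prod

section Words

variable {f : ι → X → X} {c : ι → ℝ} {w v : List ι}

@[simp] theorem wordMap_nil (f : ι → X → X) : wordMap f [] = id := rfl

@[simp] theorem wordMap_cons (f : ι → X → X) (i : ι) (w : List ι) :
    wordMap f (i :: w) = f i ∘ wordMap f w := rfl

theorem wordMap_append (f : ι → X → X) (w w' : List ι) :
    wordMap f (w ++ w') = wordMap f w ∘ wordMap f w' := by
  induction w with
  | nil => rfl
  | cons i w ih => simp [ih, Function.comp_assoc]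

@[simp] theorem wordRatio_nil (c : ι → ℝ) : wordRatio c [] = 1 := rfl

@[simp] theorem wordRatio_cons (c : ι → ℝ) (i : ι) (w : List ι) :
    wordRatio c (i :: w) = c i * wordRatio c w := by
  simp [wordRatio]

@[simp] theorem wordRatio_append (c : ι → ℝ) (w w' : List ι) :
    wordRatio c (w ++ w') = wordRatio c w * wordRatio c w' := by
  simp [wordRatio]

theorem wordRatio_ofFn (c : ι → ℝ) {k : ℕ} (v : Fin k → ι) :
    wordRatio c (List.ofFn v) = ∏ j, c (v j) := by
  simp [wordRatio, List.prod_ofFn]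

theorem wordRatio_nonneg (hc : ∀ i, 0 ≤ c i) (w : List ι) : 0 ≤ wordRatio c w :=
  List.prod_nonneg <| by simpa using fun i _ => hc i

theorem wordRatio_pos (hc : ∀ i, 0 < c i) (w : List ι) : 0 < wordRatio c w :=
  List.prod_pos <| by simpa using fun i _ => hc i

theorem wordRatio_le_pow {b : ℝ} (hc : ∀ i, 0 ≤ c i) (hcb : ∀ i, c i ≤ b) (w : List ι) :
    wordRatio c w ≤ b ^ w.length := by
  induction w with
  | nil => simp
  | cons i w ih =>
    rw [wordRatio_cons, List.length_cons, pow_succ']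
    exact mul_le_mul (hcb i) ih (wordRatio_nonneg hc w) ((hc i).trans (hcb i))

theorem sum_wordRatio_ofFn_rpow [Fintype ι] (hc : ∀ i, 0 ≤ c i) (s : ℝ) (k : ℕ) :
    ∑ v : Fin k → ι, wordRatio c (List.ofFn v) ^ s = (∑ i, c i ^ s) ^ k := by
  classical
  simp_rw [wordRatio_ofFn, ← Real.finsetProd_rpow _ _ (fun j _ => hc _)]
  rw [← Fin.prod_const, Fintype.prod_sum]

theorem mapsTo_wordMap {V : Set X} (hV : ∀ i, MapsTo (f i) V V) (w : List ι) :
    MapsTo (wordMap f w) V V := by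
  induction w with
  | nil => exact mapsTo_id V
  | cons i w ih => exact (hV i).comp ih

theorem wordMap_image_subset_of_prefix {A : Set X} (hA : ∀ i, MapsTo (f i) A A)
    (h : w <+: v) : wordMap f v '' A ⊆ wordMap f w '' A := by
  obtain ⟨u, rfl⟩ := h
  rw [wordMap_append, image_comp]
  exact image_mono (mapsTo_wordMap hA u).image_subset

theorem subset_iUnion_wordMap_image {A : Set X} (hA : A ⊆ ⋃ i, f i '' A) (k : ℕ) :
    A ⊆ ⋃ v : Fin k → ι, wordMap f (List.ofFn v) '' A := by
  induction k with
  | zero => exact fun a ha => mem_iUnion.2 ⟨Fin.elim0, by simpa using ha⟩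
  | succ k ih =>
    intro a ha
    obtain ⟨i, b, hb, rfl⟩ := mem_iUnion.1 (hA ha)
    obtain ⟨v, x, hx, rfl⟩ := mem_iUnion.1 (ih hb)
    exact mem_iUnion.2 ⟨Fin.cons i v, x, hx, by simp [List.ofFn_succ]⟩

end Words

def IsCut (c : ι → ℝ) (ρ : ℝ) (w : List ι) : Prop :=
  wordRatio c w ≤ ρ ∧ ∀ u, u <+: w → u ≠ w → ρ < wordRatio c u

section Cut

variable {c : ι → ℝ} {ρ : ℝ} {w w' v : List ι}

theorem IsCut.eq_of_prefix (hw : IsCut c ρ w) (hw' : IsCut c ρ w') (h : w <+: w') : w = w' :=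
  by_contra fun hne => (hw'.2 w h hne).not_ge hw.1

theorem exists_isCut_prefix (hv : wordRatio c v ≤ ρ) : ∃ w, w <+: v ∧ IsCut c ρ w := by
  induction hn : v.length using Nat.strong_induction_on generalizing v with
  | _ n ih =>
    by_cases hmin : ∀ u, u <+: v → u ≠ v → ρ < wordRatio c u
    · exact ⟨v, List.prefix_refl v, hv, hmin⟩
    simp only [not_forall, not_lt] at hmin
    obtain ⟨u, huv, hne, hu⟩ := hmin
    have hlt : u.length < n := hn ▸ huv.length_le.lt_of_ne (mt huv.eq_of_length hne)
    obtain ⟨w, hwu, hw⟩ := ih _ hlt hu rfl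
    exact ⟨w, hwu.trans huv, hw⟩

theorem IsCut.mul_le_wordRatio {m : ℝ} (hw : IsCut c ρ w) (hρ : ρ < 1) (hm0 : 0 ≤ m)
    (hm : ∀ i, m ≤ c i) : m * ρ ≤ wordRatio c w := by
  have hne : w ≠ [] := by
    rintro rfl
    exact (hw.1.trans_lt hρ).ne (wordRatio_nil c)
  have hlast := List.dropLast_append_getLast hne
  have hdrop : ρ < wordRatio c w.dropLast := hw.2 _ (List.dropLast_prefix w) fun h => by
    simpa [h] using congrArg List.length hlast
  rw [← hlast, wordRatio_append, wordRatio_cons, wordRatio_nil, mul_one, mul_comm]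
  exact mul_le_mul hdrop.le (hm _) hm0 (wordRatio_nonneg (fun i => hm0.trans (hm i)) _)

end Cut

theorem disjoint_wordMap_image {f : ι → X → X} {V : Set X} (hinj : ∀ i, Injective (f i))
    (hV : ∀ i, MapsTo (f i) V V) (hdisj : Pairwise (Disjoint on (f · '' V))) :
    ∀ {w w' : List ι}, ¬ w <+: w' → ¬ w' <+: w →
      Disjoint (wordMap f w '' V) (wordMap f w' '' V)
  | [], _, h, _ => (h (List.nil_prefix)).elim
  | _ :: _, [], _, h => (h (List.nil_prefix)).elim
  | i :: u, j :: u', h, h' => by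
    simp only [wordMap_cons, image_comp]
    rcases eq_or_ne i j with rfl | hij
    · refine (disjoint_image_iff (hinj i)).2 (disjoint_wordMap_image hinj hV hdisj ?_ ?_)
      exacts [fun hu => h (List.cons_prefix_cons.2 ⟨rfl, hu⟩),
        fun hu => h' (List.cons_prefix_cons.2 ⟨rfl, hu⟩)]
    · exact (hdisj hij).mono (image_mono (mapsTo_wordMap hV u).image_subset)
        (image_mono (mapsTo_wordMap hV u').image_subset)

theorem pairwiseDisjoint_wordMap_image_of_isCut {f : ι → X → X} {V : Set X} {c : ι → ℝ} {ρ : ℝ}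
    {S : Set (List ι)} (hinj : ∀ i, Injective (f i)) (hV : ∀ i, MapsTo (f i) V V)
    (hdisj : Pairwise (Disjoint on (f · '' V))) (hS : ∀ w ∈ S, IsCut c ρ w) :
    S.PairwiseDisjoint fun w => wordMap f w '' V := fun w hw w' hw' hne =>
  disjoint_wordMap_image hinj hV hdisj (fun h => hne ((hS w hw).eq_of_prefix (hS w' hw') h))
    (fun h => hne ((hS w' hw').eq_of_prefix (hS w hw) h).symm)

theorem exists_isCut_prefix_meets {f : ι → X → X} {c : ι → ℝ} {A : Set X}
    (hAf : ∀ i, MapsTo (f i) A A) (hAne : A.Nonempty) {F : Finset ℕ} {U : ℕ → Set X}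
    {ρ : ℕ → ℝ} (hAU : A ⊆ ⋃ m ∈ F, U m) {v : List ι} (hv : ∀ m ∈ F, wordRatio c v ≤ ρ m) :
    ∃ m ∈ F, ∃ w, w <+: v ∧ IsCut c (ρ m) w ∧ (wordMap f w '' A ∩ U m).Nonempty := by
  obtain ⟨a, ha⟩ := hAne
  obtain ⟨m, hm, hmU⟩ := mem_iUnion₂.1 (hAU (mapsTo_wordMap hAf v ha))
  obtain ⟨w, hwv, hw⟩ := exists_isCut_prefix (hv m hm)
  exact ⟨m, hm, w, hwv, hw, _, wordMap_image_subset_of_prefix hAf hwv ⟨a, ha, rfl⟩, hmU⟩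

theorem one_le_sum_wordRatio_rpow [Fintype ι] {c : ι → ℝ} {s : ℝ} (hc : ∀ i, 0 ≤ c i)
    (hs : 1 ≤ ∑ i, c i ^ s) (N : ℕ) (W : Finset (List ι))
    (hW : ∀ v : List ι, v.length = N → ∃ w ∈ W, w <+: v) :
    1 ≤ ∑ w ∈ W, wordRatio c w ^ s := by
  classical
  have hnonneg : ∀ w, 0 ≤ wordRatio c w ^ s := fun w =>
    Real.rpow_nonneg (wordRatio_nonneg hc w) s
  induction N generalizing W with
  | zero =>
    obtain ⟨w, hw, hwv⟩ := hW [] rfl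
    simpa [List.prefix_nil.1 hwv] using Finset.single_le_sum (fun w _ => hnonneg w) hw
  | succ N ih =>
    by_cases hnil : [] ∈ W
    · simpa using Finset.single_le_sum (fun w _ => hnonneg w) hnil
    let Wi i := W.preimage (List.cons i) List.cons_injective.injOn
    have hcov : ∀ i, ∀ v : List ι, v.length = N → ∃ u ∈ Wi i, u <+: v := by
      intro i v hv
      obtain ⟨_ | ⟨j, u⟩, hw, hwv⟩ := hW (i :: v) (by simp [hv])
      · exact absurd hw hnil
      obtain ⟨rfl, huv⟩ := List.cons_prefix_cons.1 hwv
      exact ⟨u, by simpa [Wi] using hw, huv⟩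
    calc 1 ≤ ∑ i, c i ^ s := hs
      _ ≤ ∑ i, c i ^ s * ∑ u ∈ Wi i, wordRatio c u ^ s :=
          Finset.sum_le_sum fun i _ =>
            le_mul_of_one_le_right (Real.rpow_nonneg (hc i) s) (ih (Wi i) (hcov i))
      _ = ∑ x ∈ Finset.univ.sigma Wi, wordRatio c (x.1 :: x.2) ^ s := by
          simp_rw [Finset.sum_sigma, Finset.mul_sum, wordRatio_cons,
            Real.mul_rpow (hc _) (wordRatio_nonneg hc _)]
      _ = ∑ w ∈ (Finset.univ.sigma Wi).image fun x : (_ : ι) × List ι => x.1 :: x.2,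
            wordRatio c w ^ s := by
          rw [Finset.sum_image]
          rintro ⟨i, u⟩ - ⟨j, u'⟩ - h
          obtain ⟨rfl, rfl⟩ := List.cons_eq_cons.1 h
          rfl
      _ ≤ ∑ w ∈ W, wordRatio c w ^ s :=
          Finset.sum_le_sum_of_subset_of_nonneg
            (by rintro _ h; obtain ⟨⟨i, u⟩, hu, rfl⟩ := Finset.mem_image.1 h; simpa [Wi] using hu)
            fun w _ _ => hnonneg w

theorem one_le_sum_sum_wordRatio_rpow [Fintype ι] {κ : Type*} {c : ι → ℝ} {s : ℝ}
    (hc : ∀ i, 0 ≤ c i) (hs : 1 ≤ ∑ i, c i ^ s) (N : ℕ) {F : Finset κ} {W : κ → Finset (List ι)}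
    (hW : ∀ v : List ι, v.length = N → ∃ m ∈ F, ∃ w ∈ W m, w <+: v) :
    1 ≤ ∑ m ∈ F, ∑ w ∈ W m, wordRatio c w ^ s := by
  classical
  calc 1 ≤ ∑ w ∈ (F.sigma W).image Sigma.snd, wordRatio c w ^ s :=
        one_le_sum_wordRatio_rpow hc hs N _ fun v hv => by
          obtain ⟨m, hm, w, hw, hwv⟩ := hW v hv
          exact ⟨w, Finset.mem_image.2 ⟨⟨m, w⟩, Finset.mem_sigma.2 ⟨hm, hw⟩, rfl⟩, hwv⟩
    _ ≤ ∑ x ∈ F.sigma W, wordRatio c x.2 ^ s :=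
        Finset.sum_image_le_of_nonneg fun w _ => Real.rpow_nonneg (wordRatio_nonneg hc w) s
    _ = ∑ m ∈ F, ∑ w ∈ W m, wordRatio c w ^ s := Finset.sum_sigma _ _ _

section Metric

variable [PseudoMetricSpace X] {f : ι → X → X} {c : ι → ℝ}

theorem dist_wordMap_le (hf : ∀ i x y, dist (f i x) (f i y) ≤ c i * dist x y)
    (hc : ∀ i, 0 ≤ c i) (w : List ι) (x y : X) :
    dist (wordMap f w x) (wordMap f w y) ≤ wordRatio c w * dist x y := by
  induction w with
  | nil => simp
  | cons i w ih =>
    rw [wordRatio_cons, mul_assoc]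
    exact (hf i _ _).trans (mul_le_mul_of_nonneg_left ih (hc i))

theorem dist_wordMap (hf : ∀ i x y, dist (f i x) (f i y) = c i * dist x y) (w : List ι)
    (x y : X) : dist (wordMap f w x) (wordMap f w y) = wordRatio c w * dist x y := by
  induction w with
  | nil => simp
  | cons i w ih => simp [hf, ih, mul_assoc]

theorem lipschitzWith_wordMap (hf : ∀ i x y, dist (f i x) (f i y) ≤ c i * dist x y)
    (hc : ∀ i, 0 ≤ c i) (w : List ι) :
    LipschitzWith (wordRatio c w).toNNReal (wordMap f w) :=
  LipschitzWith.of_dist_le_mul fun x y => by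
    rw [Real.coe_toNNReal _ (wordRatio_nonneg hc w)]
    exact dist_wordMap_le hf hc w x y

theorem wordMap_image_subset_closedBall (hf : ∀ i x y, dist (f i x) (f i y) ≤ c i * dist x y)
    (hc : ∀ i, 0 ≤ c i) {K A : Set X} (hKA : IsBounded (A ∪ K)) {w : List ι} {a x : X}
    (ha : a ∈ A) {ρ : ℝ} (hw : wordRatio c w ≤ ρ) (hx : dist (wordMap f w a) x ≤ ρ) :
    wordMap f w '' K ⊆ closedBall x ((1 + diam (A ∪ K)) * ρ) := by
  rintro _ ⟨y, hy, rfl⟩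
  rw [mem_closedBall]
  calc dist (wordMap f w y) x ≤ dist (wordMap f w y) (wordMap f w a) + dist (wordMap f w a) x :=
        dist_triangle _ _ _
    _ ≤ ρ * diam (A ∪ K) + ρ := by
        gcongr
        exact (dist_wordMap_le hf hc w y a).trans (mul_le_mul hw
          (dist_le_diam_of_mem hKA (Or.inr hy) (Or.inl ha)) dist_nonneg
          ((wordRatio_nonneg hc w).trans hw))
    _ = (1 + diam (A ∪ K)) * ρ := by ring

end Metric

section UpperBound

variable [MetricSpace X] [MeasurableSpace X] [BorelSpace X] [Fintype ι] {f : ι → X → X}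
  {c : ι → ℝ} {A : Set X} {s : ℝ}

theorem hausdorffMeasure_le_ediam_rpow (hf : ∀ i x y, dist (f i x) (f i y) ≤ c i * dist x y)
    (hc0 : ∀ i, 0 ≤ c i) (hc1 : ∀ i, c i < 1) (hA : IsBounded A) (hAf : A ⊆ ⋃ i, f i '' A)
    (hs0 : 0 ≤ s) (hs : ∑ i, c i ^ s ≤ 1) : μH[s] A ≤ ediam A ^ s := by
  obtain ⟨b, hb0, hb1, hcb⟩ := exists_forall_le_lt_one hc0 hc1
  have hdiam (k : ℕ) (v : Fin k → ι) : ediam (wordMap f (List.ofFn v) '' A) ≤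
      ENNReal.ofReal (wordRatio c (List.ofFn v)) * ediam A :=
    (lipschitzWith_wordMap hf hc0 _).ediam_image_le A
  refine (Measure.hausdorffMeasure_le_liminf_sum s A (l := atTop)
    (fun k => ENNReal.ofReal (b ^ k) * ediam A) ?_
    (fun k (v : Fin k → ι) => wordMap f (List.ofFn v) '' A) ?_ ?_).trans ?_
  · simpa using ENNReal.Tendsto.mul_const
      (ENNReal.tendsto_ofReal (tendsto_pow_atTop_nhds_zero_of_lt_one hb0 hb1))
      (Or.inr hA.ediam_ne_top)
  · refine Eventually.of_forall fun k v => (hdiam k v).trans ?_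
    gcongr
    simpa using wordRatio_le_pow hc0 hcb (List.ofFn v)
  · exact Eventually.of_forall (subset_iUnion_wordMap_image hAf)
  refine liminf_le_of_frequently_le' (Frequently.of_forall fun k => ?_)
  calc ∑ v, ediam (wordMap f (List.ofFn v) '' A) ^ s
      ≤ ∑ v : Fin k → ι, ENNReal.ofReal (wordRatio c (List.ofFn v) ^ s) * ediam A ^ s := by
        refine Finset.sum_le_sum fun v _ => ?_
        rw [← ENNReal.ofReal_rpow_of_nonneg (wordRatio_nonneg hc0 _) hs0,
          ← ENNReal.mul_rpow_of_nonneg _ _ hs0]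
        exact ENNReal.rpow_le_rpow (hdiam k v) hs0
    _ = ENNReal.ofReal ((∑ i, c i ^ s) ^ k) * ediam A ^ s := by
        rw [← Finset.sum_mul, ← ENNReal.ofReal_sum_of_nonneg fun v _ =>
          Real.rpow_nonneg (wordRatio_nonneg hc0 _) s, sum_wordRatio_ofFn_rpow hc0]
    _ ≤ ediam A ^ s := by
        refine mul_le_of_le_one_left' (ENNReal.ofReal_le_one.2 (pow_le_one₀ ?_ hs))
        exact Finset.sum_nonneg fun i _ => Real.rpow_nonneg (hc0 i) s

theorem dimH_le_of_sum_rpow_le_one (hf : ∀ i x y, dist (f i x) (f i y) ≤ c i * dist x y)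
    (hc0 : ∀ i, 0 ≤ c i) (hc1 : ∀ i, c i < 1) (hA : IsBounded A) (hAf : A ⊆ ⋃ i, f i '' A)
    (hs0 : 0 ≤ s) (hs : ∑ i, c i ^ s ≤ 1) : dimH A ≤ ENNReal.ofReal s := by
  refine dimH_le_of_hausdorffMeasure_ne_top ?_
  rw [Real.coe_toNNReal s hs0]
  exact ne_top_of_le_ne_top (ENNReal.rpow_ne_top_of_nonneg hs0 hA.ediam_ne_top)
    (hausdorffMeasure_le_ediam_rpow hf hc0 hc1 hA hAf hs0 hs)

end UpperBound

section LowerBound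

variable {E : Type*} [NormedAddCommGroup E] [NormedSpace ℝ E] [FiniteDimensional ℝ E]
  [MeasurableSpace E] [BorelSpace E] {f : ι → E → E} {c : ι → ℝ} {V A : Set E}

theorem exists_card_isCut_le [Finite ι] [Nonempty ι] (hc : ∀ i, 0 < c i)
    (hsim : ∀ i x y, dist (f i x) (f i y) = c i * dist x y) (hVne : V.Nonempty)
    (hVo : IsOpen V) (hV : ∀ i, MapsTo (f i) V V)
    (hdisj : Pairwise (Disjoint on (f · '' V))) (hA : IsBounded A) :
    ∃ C : ℝ, ∀ ρ, 0 < ρ → ρ < 1 → ∀ U : Set E, ediam U ≤ ENNReal.ofReal ρ →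
      ∀ S : Finset (List ι), (∀ w ∈ S, IsCut c ρ w ∧ (wordMap f w '' A ∩ U).Nonempty) →
        (#S : ℝ) ≤ C := by
  obtain ⟨x₀, hx₀⟩ := hVne
  obtain ⟨r, hr, hball⟩ := Metric.isOpen_iff.1 hVo x₀ hx₀
  have hKV : closedBall x₀ (r / 2) ⊆ V := (closedBall_subset_ball (half_lt_self hr)).trans hball
  obtain ⟨i₀, hi₀⟩ := Finite.exists_min c
  set D := diam (A ∪ closedBall x₀ (r / 2))
  have hD : 0 ≤ D := diam_nonneg
  have hc₀ : 0 < c i₀ := hc i₀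
  refine ⟨((1 + D) / (c i₀ * (r / 2))) ^ Module.finrank ℝ E, fun ρ hρ0 hρ1 U hU S hS => ?_⟩
  rcases S.eq_empty_or_nonempty with rfl | ⟨w₀, hw₀⟩
  · simpa using by positivity
  obtain ⟨-, ⟨a₀, -, rfl⟩, hxU⟩ := (hS w₀ hw₀).2
  have hinj (i : ι) : Injective (f i) := fun y z h => by
    simpa [(hc i).ne'] using (hsim i y z).symm.trans (dist_eq_zero.2 h)
  have hsub (w : List ι) (hw : w ∈ S) :
      wordMap f w '' closedBall x₀ (r / 2) ⊆ closedBall (wordMap f w₀ a₀) ((1 + D) * ρ) := by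
    obtain ⟨hcut, _, ⟨a, ha, rfl⟩, hpU⟩ := hS w hw
    exact wordMap_image_subset_closedBall (fun i x y => (hsim i x y).le) (fun i => (hc i).le)
      (hA.union isBounded_closedBall) ha hcut.1
      ((edist_le_ofReal hρ0.le).1 (edist_le_of_ediam_le hpU hxU hU))
  have key := card_le_of_pairwiseDisjoint_image_closedBall (mul_pos hc₀ hρ0) (half_pos hr)
    (by positivity) (fun w _ => dist_wordMap hsim w)
    (fun w hw => (hS w hw).1.mul_le_wordRatio hρ1 hc₀.le hi₀)
    ((pairwiseDisjoint_wordMap_image_of_isCut hinj hV hdisj fun w hw => (hS w hw).1).mono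
      fun w => image_mono hKV) hsub
  rwa [mul_right_comm, mul_div_mul_right _ _ hρ0.ne'] at key

theorem exists_coverLowerBound [Fintype ι] {s : ℝ} (hc : ∀ i, c i ∈ Ioo 0 1)
    (hsim : ∀ i x y, dist (f i x) (f i y) = c i * dist x y) (hVne : V.Nonempty)
    (hVo : IsOpen V) (hV : ∀ i, MapsTo (f i) V V) (hdisj : Pairwise (Disjoint on (f · '' V)))
    (hA : IsBounded A) (hAne : A.Nonempty) (hAf : ∀ i, MapsTo (f i) A A) (hs0 : 0 ≤ s)
    (hs : 1 ≤ ∑ i, c i ^ s) : ∃ C : ℝ≥0, CoverLowerBound A s C := by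
  classical
  have hc0 (i : ι) : 0 ≤ c i := (hc i).1.le
  have : Nonempty ι := by
    by_contra h
    norm_num [not_nonempty_iff.1 h] at hs
  obtain ⟨C, hC⟩ := exists_card_isCut_le (fun i => (hc i).1) hsim hVne hVo hV hdisj hA
  obtain ⟨b, hb0, hb1, hcb⟩ := exists_forall_le_lt_one hc0 fun i => (hc i).2
  refine ⟨C.toNNReal, coverLowerBound_of_real hs0 fun F U ρ hAU hρ => ?_⟩
  obtain ⟨N, hN⟩ : ∃ N : ℕ, ∀ m ∈ F, b ^ N ≤ ρ m :=
    ((Finset.eventually_all F).2 fun m hm => (tendsto_pow_atTop_nhds_zero_of_lt_one hb0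
      hb1).eventually (ge_mem_nhds (hρ m hm).2.1)).exists
  let W (m : ℕ) : Finset (List ι) := (List.finite_length_le ι N).toFinset.filter fun w =>
    IsCut c (ρ m) w ∧ (wordMap f w '' A ∩ U m).Nonempty
  have hcover (v : List ι) (hv : v.length = N) : ∃ m ∈ F, ∃ w ∈ W m, w <+: v := by
    obtain ⟨m, hm, w, hwv, hw⟩ := exists_isCut_prefix_meets hAf hAne hAU fun m hm =>
      (wordRatio_le_pow hc0 hcb v).trans (hv ▸ hN m hm)
    exact ⟨m, hm, w, Finset.mem_filter.2 ⟨by simpa using hwv.length_le.trans hv.le, hw⟩, hwv⟩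
  calc 1 ≤ ∑ m ∈ F, ∑ w ∈ W m, wordRatio c w ^ s :=
        one_le_sum_sum_wordRatio_rpow hc0 hs N hcover
    _ ≤ ∑ m ∈ F, #(W m) * ρ m ^ s := Finset.sum_le_sum fun m _ => by
        rw [← nsmul_eq_mul]
        exact Finset.sum_le_card_nsmul _ _ _ fun w hw =>
          Real.rpow_le_rpow (wordRatio_nonneg hc0 w) (Finset.mem_filter.1 hw).2.1.1 hs0
    _ ≤ ∑ m ∈ F, C * ρ m ^ s := Finset.sum_le_sum fun m hm => by
        obtain ⟨hUρ, hρ0, hρ1⟩ := hρ m hm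
        exact mul_le_mul_of_nonneg_right (hC _ hρ0 hρ1 (U m) hUρ _ fun w hw =>
          (Finset.mem_filter.1 hw).2) (Real.rpow_nonneg hρ0.le s)
    _ = C * ∑ m ∈ F, ρ m ^ s := (Finset.mul_sum _ _ _).symm

theorem le_dimH_of_one_le_sum_rpow [Fintype ι] {s : ℝ} (hc : ∀ i, c i ∈ Ioo 0 1)
    (hsim : ∀ i x y, dist (f i x) (f i y) = c i * dist x y) (hVne : V.Nonempty)
    (hVo : IsOpen V) (hV : ∀ i, MapsTo (f i) V V) (hdisj : Pairwise (Disjoint on (f · '' V)))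
    (hA : IsCompact A) (hAne : A.Nonempty) (hAf : ∀ i, MapsTo (f i) A A)
    (hs : 1 ≤ ∑ i, c i ^ s) : ENNReal.ofReal s ≤ dimH A := by
  rcases le_or_gt s 0 with hs0 | hs0
  · simp [ENNReal.ofReal_of_nonpos hs0]
  obtain ⟨C, hC⟩ := exists_coverLowerBound hc hsim hVne hVo hV hdisj hA.isBounded hAne hAf
    hs0.le hs
  refine le_dimH_of_hausdorffMeasure_ne_zero (d := s.toNNReal) ?_
  rw [Real.coe_toNNReal s hs0.le]
  exact hC.hausdorffMeasure_ne_zero hA hs0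

end LowerBound

end SelfSimilar

open SelfSimilar

theorem stmt_9_general (d n : ℕ)
    (f : Fin n → EuclideanSpace ℝ (Fin d) → EuclideanSpace ℝ (Fin d))
    (c : Fin n → ℝ) (hc : ∀ i, c i ∈ Ioo (0 : ℝ) 1)
    (hsim : ∀ i x y, dist (f i x) (f i y) = c i * dist x y)
    (V : Set (EuclideanSpace ℝ (Fin d))) (hVne : V.Nonempty)
    (hVo : IsOpen V)
    (hFV : (⋃ i, f i '' V) ⊆ V)
    (hdisj : ∀ i j, i ≠ j → Disjoint (f i '' V) (f j '' V))
    (A : Set (EuclideanSpace ℝ (Fin d))) (hA : IsCompact A) (hAne : A.Nonempty)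
    (hinv : A = ⋃ i, f i '' A)
    (s : ℝ) (hs : ∑ i, c i ^ s = 1) :
    dimH A = ENNReal.ofReal s := by
  have hV (i : Fin n) : MapsTo (f i) V V :=
    mapsTo_iff_image_subset.2 ((subset_iUnion _ i).trans hFV)
  have hAf (i : Fin n) : MapsTo (f i) A A :=
    mapsTo_iff_image_subset.2 ((subset_iUnion (fun i => f i '' A) i).trans hinv.symm.subset)
  exact le_antisymm
    (dimH_le_of_sum_rpow_le_one (fun i x y => (hsim i x y).le) (fun i => (hc i).1.le)
      (fun i => (hc i).2) hA.isBounded hinv.subset (nonneg_of_sum_rpow_eq_one hc hs) hs.le)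
    (le_dimH_of_one_le_sum_rpow hc hsim hVne hVo hV hdisj hA hAne hAf hs.ge)

/-- Moran's theorem: if `f₁, …, f_n : ℝ^d → ℝ^d` are contracting similarities with ratios
`c₁, …, c_n` satisfying the open set condition and `A` is a nonempty compact set with
`A = f₁(A) ∪ ⋯ ∪ f_n(A)`, then `dim_H A = s` where `∑ cᵢ^s = 1`. -/
theorem stmt_9 (d n : ℕ)
    (f : Fin n → EuclideanSpace ℝ (Fin d) → EuclideanSpace ℝ (Fin d))
    (c : Fin n → ℝ) (hc : ∀ i, c i ∈ Ioo (0 : ℝ) 1)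
    (hsim : ∀ i x y, dist (f i x) (f i y) = c i * dist x y)
    (V : Set (EuclideanSpace ℝ (Fin d))) (hVne : V.Nonempty)
    (hVb : Bornology.IsBounded V) (hVo : IsOpen V)
    (hFV : (⋃ i, f i '' V) ⊆ V)
    (hdisj : ∀ i j, i ≠ j → Disjoint (f i '' V) (f j '' V))
    (A : Set (EuclideanSpace ℝ (Fin d))) (hA : IsCompact A) (hAne : A.Nonempty)
    (hinv : A = ⋃ i, f i '' A)
    (s : ℝ) (hs : ∑ i, c i ^ s = 1) :
    dimH A = ENNReal.ofReal s :=
  stmt_9_general d n f c hc hsim V hVne hVo hFV hdisj A hA hAne hinv s hs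
end

section
/- For every nondegenerate interval I ⊆ ℝ and every θ ∈ [0,1] there exists a sequence (d_n : I → ℝ)_{n=1}^∞ of continuous functions with 0 ≤ d₁ ≤ d₂ ≤ ⋯ pointwise such that the set I_d := {x ∈ I : lim_{n→∞} d_n(x) = +∞} is nowhere dense in I and dim_H I_d = θ. -/
/-!
For `0 < θ < 1` put `r = 2 ^ (-1/θ) < 1/2` and let `C_r` be the Cantor set of the points
`∑ εₙ (1 - r) rⁿ`, `ε ∈ {0,1}^ℕ`. It is covered by `2ⁿ` pieces of diameter `rⁿ`, and
`(rⁿ)^θ = 2⁻ⁿ`, so `dim_H C_r ≤ θ`. Since `r < 1/2`, two digit sequences that first differ at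
`n` give points at distance at least `(1 - 2r) rⁿ`, so reading the digits in base 2 is a
`θ`-Hölder map from `C_r` onto `[0,1]`, whence `dim_H C_r ≥ θ`. For `θ = 1` take a union of such
sets with dimensions tending to `1` that accumulate only at one endpoint, plus that endpoint; for
`θ = 0` a point. Placed inside `I`, such a set `E` is closed and Lebesgue-null, hence nowhere
dense, and `dₙ(x) = n / (1 + n · dist(x, E))` increases to `+∞` exactly on `E`.
-/

open Set Filter Topology MeasureTheory

open scoped ENNReal NNReal

section HausdorffDimension

variable {X Y Z : Type*} [EMetricSpace X] [EMetricSpace Y] [EMetricSpace Z]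

theorem dimH_le_of_finite_covers {s : Set X} {ι : ℕ → Type*} [∀ n, Fintype (ι n)]
    {t : ∀ n, ι n → Set X} {δ : ℕ → ℝ≥0∞} {d : ℝ≥0} {C : ℝ≥0∞} (hδ : Tendsto δ atTop (𝓝 0))
    (hdiam : ∀ n i, Metric.ediam (t n i) ≤ δ n) (hcover : ∀ n, s ⊆ ⋃ i, t n i)
    (hsum : ∀ n, Fintype.card (ι n) * δ n ^ (d : ℝ) ≤ C) (hC : C ≠ ∞) : dimH s ≤ d := by
  borelize X
  refine dimH_le_of_hausdorffMeasure_ne_top (ne_top_of_le_ne_top hC ?_)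
  refine (Measure.hausdorffMeasure_le_liminf_sum _ s δ hδ t (.of_forall hdiam)
    (.of_forall hcover)).trans ?_
  refine liminf_le_of_frequently_le (.of_forall fun n => ?_)
  calc ∑ i, Metric.ediam (t n i) ^ (d : ℝ) ≤ ∑ _i : ι n, δ n ^ (d : ℝ) := by
        gcongr with i; exact hdiam n i
    _ = Fintype.card (ι n) * δ n ^ (d : ℝ) := by simp
    _ ≤ C := hsum n

theorem dimH_range_le_of_edist_le {α : Type*} {f : α → Y} {g : α → Z} {C r : ℝ≥0} (hr : 0 < r)
    (h : ∀ x y, edist (f x) (f y) ≤ C * edist (g x) (g y) ^ (r : ℝ)) :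
    dimH (range f) ≤ dimH (range g) / r := by
  cases isEmpty_or_nonempty α
  · simp [range_eq_empty]
  have hfg : ∀ x, f (Function.invFun g (g x)) = f x := fun x => by
    have := h (Function.invFun g (g x)) x
    rwa [Function.invFun_eq (f := g) ⟨x, rfl⟩, edist_self,
      ENNReal.zero_rpow_of_pos (by exact_mod_cast hr), mul_zero, nonpos_iff_eq_zero,
      edist_eq_zero] at this
  have hholder : HolderOnWith C r (f ∘ Function.invFun g) (range g) := by
    rintro _ ⟨x, rfl⟩ _ ⟨y, rfl⟩
    simpa only [Function.comp_apply, hfg] using h x y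
  have himage : (f ∘ Function.invFun g) '' range g = range f := by
    rw [← range_comp]; exact congrArg range (funext hfg)
  exact himage ▸ hholder.dimH_image_le hr

end HausdorffDimension

theorem Real.dimH_image_affine (a : ℝ) {c : ℝ} (hc : c ≠ 0) (s : Set ℝ) :
    dimH ((fun x => a + c * x) '' s) = dimH s := by
  have : (fun x => a + c * x) =
      IsometryEquiv.addLeft a ∘ ContinuousLinearEquiv.unitsEquivAut ℝ (Units.mk0 c hc) := by
    ext; simp [mul_comm]
  rw [this, image_comp, IsometryEquiv.dimH_image, ContinuousLinearEquiv.dimH_image]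

theorem IsNowhereDense.preimage_val {X : Type*} [TopologicalSpace X] {I E : Set X}
    (hI : I ⊆ closure (interior I)) (hE : IsNowhereDense E) :
    IsNowhereDense (Subtype.val ⁻¹' E : Set I) := by
  refine IsNowhereDense.mono (preimage_mono subset_closure) ?_
  rw [(isClosed_closure.preimage continuous_subtype_val).isNowhereDense_iff,
    eq_empty_iff_forall_notMem]
  intro x hx
  obtain ⟨V, hVE, hV, hxV⟩ := mem_interior.1 hx
  obtain ⟨U, hU, rfl⟩ := isOpen_induced_iff.1 hV
  have hUE : U ∩ I ⊆ closure E := fun z hz => @hVE ⟨z, hz.2⟩ hz.1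
  obtain ⟨y, hyU, hyI⟩ := mem_closure_iff.1 (hI x.2) U hU hxV
  have : U ∩ interior I ⊆ interior (closure E) :=
    interior_maximal (fun z hz => hUE ⟨hz.1, interior_subset hz.2⟩) (hU.inter isOpen_interior)
  rw [hE] at this
  exact this ⟨hyU, hyI⟩

theorem Set.OrdConnected.subset_closure_interior {I : Set ℝ} (hI : I.OrdConnected)
    (hne : I.Nontrivial) : I ⊆ closure (interior I) := by
  obtain ⟨p, hp, q, hq, hpq⟩ := hne.exists_lt
  have hint : (interior I).Nonempty :=
    ⟨(p + q) / 2, interior_mono (Ioo_subset_Icc_self.trans (hI.out hp hq))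
      (by rw [interior_Ioo]; constructor <;> linarith)⟩
  have hconv : Convex ℝ I := convex_iff_ordConnected.2 hI
  rw [hconv.closure_interior_eq_closure_of_nonempty_interior hint]
  exact subset_closure

theorem IsClosed.isNowhereDense_of_volume_eq_zero {E : Set ℝ} (hE : IsClosed E)
    (h0 : volume E = 0) : IsNowhereDense E := by
  rw [hE.isNowhereDense_iff, ← not_nonempty_iff_eq_empty]
  exact fun hint => (Measure.measure_pos_of_nonempty_interior volume hint).ne' h0

theorem Real.volume_eq_zero_of_dimH_lt_one {s : Set ℝ} (h : dimH s < 1) : volume s = 0 := by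
  rw [← hausdorffMeasure_real]
  exact hausdorffMeasure_of_dimH_lt (d := 1) (by simpa using h)

noncomputable def cantorTerm (r : ℝ) (ε : ℕ → Fin 2) (n : ℕ) : ℝ :=
  ((ε n : ℕ) : ℝ) * ((1 - r) * r ^ n)

noncomputable def cantorMap (r : ℝ) (ε : ℕ → Fin 2) : ℝ :=
  ∑' n, cantorTerm r ε n

theorem sum_range_cantorTerm_congr {r : ℝ} {ε δ : ℕ → Fin 2} {n : ℕ} (h : ∀ k < n, ε k = δ k) :
    ∑ k ∈ Finset.range n, cantorTerm r ε k = ∑ k ∈ Finset.range n, cantorTerm r δ k :=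
  Finset.sum_congr rfl fun k hk => by rw [cantorTerm, h k (Finset.mem_range.1 hk), cantorTerm]

section cantorMap

variable {r : ℝ} (hr₀ : 0 < r) (hr₁ : r < 1)
include hr₀ hr₁

theorem cantorTerm_nonneg (ε : ℕ → Fin 2) (n : ℕ) : 0 ≤ cantorTerm r ε n :=
  mul_nonneg (Nat.cast_nonneg _) (mul_nonneg (sub_nonneg.2 hr₁.le) (pow_nonneg hr₀.le n))

theorem cantorTerm_le (ε : ℕ → Fin 2) (n : ℕ) : cantorTerm r ε n ≤ (1 - r) * r ^ n :=
  mul_le_of_le_one_left (mul_nonneg (sub_nonneg.2 hr₁.le) (pow_nonneg hr₀.le n))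
    (mod_cast Nat.le_of_lt_succ (ε n).isLt)

theorem summable_cantorTerm (ε : ℕ → Fin 2) : Summable (cantorTerm r ε) :=
  .of_nonneg_of_le (cantorTerm_nonneg hr₀ hr₁ ε) (cantorTerm_le hr₀ hr₁ ε)
    ((summable_geometric_of_lt_one hr₀.le hr₁).mul_left _)

theorem cantorMap_mem_Icc (ε : ℕ → Fin 2) (n : ℕ) :
    cantorMap r ε ∈ Icc (∑ k ∈ Finset.range n, cantorTerm r ε k)
      ((∑ k ∈ Finset.range n, cantorTerm r ε k) + r ^ n) := by
  have hgeom : ∑' k, (1 - r) * r ^ (k + n) = r ^ n := by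
    simp_rw [pow_add, mul_comm _ (r ^ n), ← mul_assoc, tsum_mul_left,
      tsum_geometric_of_lt_one hr₀.le hr₁]
    field_simp [(sub_pos.2 hr₁).ne']
  have htail : ∑' k, cantorTerm r ε (k + n) ≤ r ^ n :=
    hgeom ▸ Summable.tsum_le_tsum (fun k => cantorTerm_le hr₀ hr₁ ε _)
      ((summable_nat_add_iff n).2 (summable_cantorTerm hr₀ hr₁ ε))
      ((summable_nat_add_iff n).2 ((summable_geometric_of_lt_one hr₀.le hr₁).mul_left _))
  have htail₀ : 0 ≤ ∑' k, cantorTerm r ε (k + n) :=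
    tsum_nonneg fun k => cantorTerm_nonneg hr₀ hr₁ ε _
  rw [cantorMap, ← (summable_cantorTerm hr₀ hr₁ ε).sum_add_tsum_nat_add n]
  exact ⟨by linarith, by linarith⟩

theorem abs_cantorMap_sub_le {ε δ : ℕ → Fin 2} {n : ℕ} (h : ∀ k < n, ε k = δ k) :
    |cantorMap r ε - cantorMap r δ| ≤ r ^ n := by
  have hsum := sum_range_cantorTerm_congr (r := r) h
  obtain ⟨hε₁, hε₂⟩ := cantorMap_mem_Icc hr₀ hr₁ ε n
  obtain ⟨hδ₁, hδ₂⟩ := cantorMap_mem_Icc hr₀ hr₁ δ n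
  rw [abs_le]
  constructor <;> linarith

theorem continuous_cantorMap : Continuous (cantorMap r) :=
  continuous_tsum (fun n => by unfold cantorTerm; fun_prop)
    ((summable_geometric_of_lt_one hr₀.le hr₁).mul_left (1 - r)) fun n ε => by
      rw [Real.norm_of_nonneg (cantorTerm_nonneg hr₀ hr₁ ε n)]
      exact cantorTerm_le hr₀ hr₁ ε n

end cantorMap

theorem le_abs_cantorMap_sub {r : ℝ} (hr₀ : 0 < r) (hr : r < 1 / 2) {ε δ : ℕ → Fin 2} {n : ℕ}
    (h : ∀ k < n, ε k = δ k) (hn : ε n ≠ δ n) :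
    (1 - 2 * r) * r ^ n ≤ |cantorMap r ε - cantorMap r δ| := by
  wlog hεδ : ε n = 1 ∧ δ n = 0 generalizing ε δ
  · rw [abs_sub_comm]
    exact this (fun k hk => (h k hk).symm) hn.symm (by omega)
  have hr₁ : r < 1 := by linarith
  have hsum := sum_range_cantorTerm_congr (r := r) h
  have hε := (cantorMap_mem_Icc hr₀ hr₁ ε (n + 1)).1
  have hδ := (cantorMap_mem_Icc hr₀ hr₁ δ (n + 1)).2
  have hεn : cantorTerm r ε n = (1 - r) * r ^ n := by simp [cantorTerm, hεδ.1]
  have hδn : cantorTerm r δ n = 0 := by simp [cantorTerm, hεδ.2]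
  rw [Finset.sum_range_succ, hεn] at hε
  rw [Finset.sum_range_succ, hδn, ← hsum, pow_succ] at hδ
  refine le_trans ?_ (le_abs_self _)
  linarith

section dimension

variable {r : ℝ} {θ : ℝ≥0} (hr₀ : 0 < r) (hrθ : r ^ (θ : ℝ) = 2⁻¹)
include hr₀ hrθ

theorem dimH_range_cantorMap_le (hr₁ : r < 1) : dimH (range (cantorMap r)) ≤ θ := by
  refine dimH_le_of_finite_covers (ι := fun n => Fin n → Fin 2)
    (t := fun n σ => cantorMap r '' {ε | ∀ k : Fin n, ε k = σ k})
    (δ := fun n => ENNReal.ofReal (r ^ n)) (C := 1) ?_ ?_ ?_ ?_ ENNReal.one_ne_top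
  · simpa using ENNReal.tendsto_ofReal (tendsto_pow_atTop_nhds_zero_of_lt_one hr₀.le hr₁)
  · intro n σ
    refine Metric.ediam_le ?_
    rintro _ ⟨ε, hε, rfl⟩ _ ⟨δ, hδ, rfl⟩
    rw [edist_dist, Real.dist_eq]
    exact ENNReal.ofReal_le_ofReal
      (abs_cantorMap_sub_le hr₀ hr₁ fun k hk => (hε ⟨k, hk⟩).trans (hδ ⟨k, hk⟩).symm)
  · rintro n _ ⟨ε, rfl⟩
    exact mem_iUnion.2 ⟨fun k => ε k, ε, fun k => rfl, rfl⟩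
  · intro n
    rw [ENNReal.ofReal_rpow_of_pos (pow_pos hr₀ n), ← Real.rpow_pow_comm hr₀.le, hrθ]
    simp [ENNReal.ofReal_pow, ENNReal.ofReal_inv_of_pos]

theorem abs_ofDigits_sub_le_mul_abs_cantorMap_sub_rpow (hr : r < 1 / 2) (ε δ : ℕ → Fin 2) :
    |Real.ofDigits ε - Real.ofDigits δ| ≤
      ((1 - 2 * r) ^ (θ : ℝ))⁻¹ * |cantorMap r ε - cantorMap r δ| ^ (θ : ℝ) := by
  have h₂r : 0 < 1 - 2 * r := by linarith
  rcases eq_or_ne ε δ with rfl | hne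
  · rw [sub_self, abs_zero, sub_self, abs_zero]
    exact mul_nonneg (inv_nonneg.2 (Real.rpow_nonneg h₂r.le _)) (Real.rpow_nonneg le_rfl _)
  set n := PiNat.firstDiff ε δ
  have hagree : ∀ k < n, ε k = δ k := fun k hk => PiNat.apply_eq_of_lt_firstDiff hk
  calc |Real.ofDigits ε - Real.ofDigits δ| ≤ ((2 : ℝ) ^ n)⁻¹ :=
        mod_cast Real.abs_ofDigits_sub_ofDigits_le hagree
    _ = ((1 - 2 * r) ^ (θ : ℝ))⁻¹ * ((1 - 2 * r) * r ^ n) ^ (θ : ℝ) := by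
        rw [Real.mul_rpow h₂r.le (pow_nonneg hr₀.le n), ← Real.rpow_pow_comm hr₀.le, hrθ,
          inv_mul_cancel_left₀ (Real.rpow_pos_of_pos h₂r _).ne', inv_pow]
    _ ≤ ((1 - 2 * r) ^ (θ : ℝ))⁻¹ * |cantorMap r ε - cantorMap r δ| ^ (θ : ℝ) := by
        gcongr
        exact le_abs_cantorMap_sub hr₀ hr hagree (PiNat.apply_firstDiff_ne hne)

theorem le_dimH_range_cantorMap (hr : r < 1 / 2) (hθ : 0 < θ) :
    (θ : ℝ≥0∞) ≤ dimH (range (cantorMap r)) := by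
  have hholder : ∀ ε δ, edist (Real.ofDigits ε) (Real.ofDigits δ) ≤
      ((((1 - 2 * r) ^ (θ : ℝ))⁻¹).toNNReal : ℝ≥0∞) *
        edist (cantorMap r ε) (cantorMap r δ) ^ (θ : ℝ) := fun ε δ => by
    rw [edist_dist, edist_dist, Real.dist_eq, Real.dist_eq,
      ENNReal.ofReal_rpow_of_nonneg (abs_nonneg _) θ.coe_nonneg]
    exact (ENNReal.ofReal_le_ofReal
      (abs_ofDigits_sub_le_mul_abs_cantorMap_sub_rpow hr₀ hrθ hr ε δ)).trans_eq
      (ENNReal.ofReal_mul (inv_nonneg.2 (Real.rpow_nonneg (by linarith) _)))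
  have hunit : (1 : ℝ≥0∞) ≤ dimH (range (Real.ofDigits (b := 2))) := by
    calc (1 : ℝ≥0∞) = dimH (Icc (0 : ℝ) 1) := by
          rw [Real.dimH_of_nonempty_interior (by simp)]; simp
      _ ≤ _ := dimH_mono fun x hx => by
          simpa using Real.ofDigits_SurjOn (b := 2) one_lt_two hx
  have := hunit.trans (dimH_range_le_of_edist_le hθ hholder)
  rwa [ENNReal.le_div_iff_mul_le (.inl (by simpa using hθ.ne')) (.inl (by simp)), one_mul] at this

end dimension

theorem isClosed_insert_iUnion_of_tendsto {F : ℕ → Set ℝ} {m : ℕ → ℝ} {b : ℝ}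
    (hF : ∀ k, IsClosed (F k)) (hFm : ∀ k, F k ⊆ Icc (m k) b) (hm : Tendsto m atTop (𝓝 b)) :
    IsClosed (insert b (⋃ k, F k)) := by
  have hsub : insert b (⋃ k, F k) ⊆ Iic b :=
    insert_subset (mem_Iic.2 le_rfl) (iUnion_subset fun k => (hFm k).trans Icc_subset_Iic_self)
  refine closure_subset_iff_isClosed.1 fun x hx => ?_
  rcases (mem_Iic.1 (closure_minimal hsub isClosed_Iic hx)).eq_or_lt with rfl | hxb
  · exact mem_insert _ _
  obtain ⟨c, hxc, hcb⟩ := exists_between hxb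
  obtain ⟨N, hN⟩ := eventually_atTop.1 (hm.eventually (lt_mem_nhds hcb))
  have hcover : insert b (⋃ k, F k) ⊆ (⋃ k ∈ Finset.range N, F k) ∪ Icc c b := by
    refine insert_subset (.inr ⟨hcb.le, le_rfl⟩) (iUnion_subset fun k => ?_)
    rcases lt_or_ge k N with hk | hk
    · exact subset_union_of_subset_left
        (subset_biUnion_of_mem (Finset.mem_coe.2 (Finset.mem_range.2 hk))) _
    · exact fun y hy => .inr ⟨(hN k hk).le.trans (hFm k hy).1, (hFm k hy).2⟩
  rcases closure_minimal hcover
      ((isClosed_biUnion_finset fun k _ => hF k).union isClosed_Icc) hx with hx | hx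
  · obtain ⟨k, -, hk⟩ := mem_iUnion₂.1 hx
    exact mem_insert_of_mem _ (mem_iUnion.2 ⟨k, hk⟩)
  · exact absurd hx.1 hxc.not_ge

theorem exists_closed_null_subset_Icc_dimH_eq_of_lt_one {a b : ℝ} (hab : a < b) {θ : ℝ≥0}
    (hθ₀ : 0 < θ) (hθ₁ : θ < 1) :
    ∃ E ⊆ Icc a b, E.Nonempty ∧ IsClosed E ∧ volume E = 0 ∧ dimH E = θ := by
  set r : ℝ := 2 ^ (-(θ : ℝ)⁻¹)
  have hr₀ : 0 < r := by positivity
  have hrθ : r ^ (θ : ℝ) = 2⁻¹ := by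
    rw [← Real.rpow_mul zero_le_two, neg_mul, inv_mul_cancel₀ (by positivity), Real.rpow_neg_one]
  have hr : r < 1 / 2 := by
    have : (1 : ℝ) < (θ : ℝ)⁻¹ := one_lt_inv₀ (by positivity) |>.2 (by exact_mod_cast hθ₁)
    calc r < 2 ^ (-1 : ℝ) := Real.rpow_lt_rpow_of_exponent_lt one_lt_two (by linarith)
      _ = 1 / 2 := by rw [Real.rpow_neg_one, one_div]
  have hr₁ : r < 1 := by linarith
  have hdim : dimH (range (cantorMap r)) = θ :=
    le_antisymm (dimH_range_cantorMap_le hr₀ hrθ hr₁) (le_dimH_range_cantorMap hr₀ hrθ hr hθ₀)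
  have hba : b - a ≠ 0 := sub_ne_zero.2 hab.ne'
  refine ⟨(fun x => a + (b - a) * x) '' range (cantorMap r), ?_, (range_nonempty _).image _,
    ((isCompact_range (continuous_cantorMap hr₀ hr₁)).image (by fun_prop)).isClosed, ?_, ?_⟩
  · rintro _ ⟨_, ⟨ε, rfl⟩, rfl⟩
    obtain ⟨h₀, h₁⟩ := cantorMap_mem_Icc hr₀ hr₁ ε 0
    simp only [Finset.range_zero, Finset.sum_empty, pow_zero, zero_add] at h₀ h₁
    constructor <;> nlinarith
  · refine Real.volume_eq_zero_of_dimH_lt_one ?_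
    rw [Real.dimH_image_affine a hba, hdim]
    exact_mod_cast hθ₁
  · rw [Real.dimH_image_affine a hba, hdim]

theorem exists_closed_null_subset_Icc_dimH_eq_one {a b : ℝ} (hab : a < b) :
    ∃ E ⊆ Icc a b, E.Nonempty ∧ IsClosed E ∧ volume E = 0 ∧ dimH E = 1 := by
  set m : ℕ → ℝ := fun k => b - (b - a) * 2⁻¹ ^ k
  set θ : ℕ → ℝ≥0 := fun k => 1 - 2⁻¹ ^ (k + 1)
  have hm : Tendsto m atTop (𝓝 b) := by
    simpa using tendsto_const_nhds.sub
      ((tendsto_pow_atTop_nhds_zero_of_lt_one (by norm_num) (by norm_num)).const_mul (b - a))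
  have hθ : Tendsto (fun k => (θ k : ℝ≥0∞)) atTop (𝓝 1) := by
    have hpow : Tendsto (fun k : ℕ => (2⁻¹ : ℝ≥0) ^ (k + 1)) atTop (𝓝 0) :=
      (tendsto_pow_atTop_nhds_zero_of_lt_one (by norm_num) (by norm_num)).comp
        (tendsto_add_atTop_nat 1)
    exact ENNReal.tendsto_coe.2 (by simpa only [tsub_zero] using tendsto_const_nhds.sub hpow)
  have hma : ∀ k, a ≤ m k := fun k => by
    simp only [m]
    nlinarith [pow_le_one₀ (n := k) (by norm_num : (0 : ℝ) ≤ 2⁻¹) (by norm_num)]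
  choose F hF_sub hF_ne hF_closed hF_null hF_dim using fun k =>
    exists_closed_null_subset_Icc_dimH_eq_of_lt_one (a := m k) (b := b)
      (sub_lt_self _ (mul_pos (sub_pos.2 hab) (by positivity))) (θ := θ k)
      (tsub_pos_of_lt (pow_lt_one₀ (by norm_num) (by norm_num) (by omega)))
      (tsub_lt_self one_pos (by positivity))
  refine ⟨insert b (⋃ k, F k), ?_, insert_nonempty _ _,
    isClosed_insert_iUnion_of_tendsto hF_closed hF_sub hm, ?_, ?_⟩
  · refine insert_subset ⟨hab.le, le_rfl⟩ (iUnion_subset fun k => (hF_sub k).trans ?_)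
    exact Icc_subset_Icc_left (hma k)
  · rw [insert_eq]
    exact measure_union_null Real.volume_singleton (measure_iUnion_null hF_null)
  · refine le_antisymm ((dimH_mono (subset_univ _)).trans_eq Real.dimH_univ) ?_
    refine le_of_tendsto' hθ fun k => (hF_dim k).symm.le.trans (dimH_mono ?_)
    exact (subset_iUnion F k).trans (subset_insert _ _)

theorem exists_closed_null_subset_Icc_dimH_eq {a b : ℝ} (hab : a < b) {θ : ℝ≥0} (hθ : θ ≤ 1) :
    ∃ E ⊆ Icc a b, E.Nonempty ∧ IsClosed E ∧ volume E = 0 ∧ dimH E = θ := by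
  rcases eq_zero_or_pos θ with rfl | hθ₀
  · exact ⟨{a}, singleton_subset_iff.2 ⟨le_rfl, hab.le⟩, singleton_nonempty a,
      isClosed_singleton, Real.volume_singleton, by simp⟩
  rcases hθ.lt_or_eq with hθ₁ | rfl
  · exact exists_closed_null_subset_Icc_dimH_eq_of_lt_one hab hθ₀ hθ₁
  · simpa using exists_closed_null_subset_Icc_dimH_eq_one hab

theorem tendsto_div_one_add_mul_infDist_atTop_iff {X : Type*} [PseudoMetricSpace X] {E : Set X}
    (hE : IsClosed E) (hne : E.Nonempty) (x : X) :
    Tendsto (fun n : ℕ => (n : ℝ) / (1 + n * Metric.infDist x E)) atTop atTop ↔ x ∈ E := by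
  refine ⟨fun h => ?_, fun hx => by simpa [Metric.infDist_zero_of_mem hx] using
    tendsto_natCast_atTop_atTop⟩
  by_contra hx
  have hpos := (hE.notMem_iff_infDist_pos hne).1 hx
  obtain ⟨n, hn⟩ := (h.eventually_gt_atTop (Metric.infDist x E)⁻¹).exists
  rw [lt_div_iff₀ (by positivity), inv_mul_eq_div, div_lt_iff₀ hpos] at hn
  nlinarith

theorem exists_seq_limSet_eq (I : Set ℝ) {E : Set ℝ} (hE : IsClosed E) (hne : E.Nonempty) :
    ∃ d : ℕ → ℝ → ℝ, (∀ n, Continuous (d n)) ∧ (∀ x, 0 ≤ d 0 x) ∧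
      (∀ n x, d n x ≤ d (n + 1) x) ∧ limSet I d = I ∩ E := by
  have hden : ∀ (n : ℕ) x, 0 < 1 + n * Metric.infDist x E := fun n x =>
    add_pos_of_pos_of_nonneg one_pos (mul_nonneg n.cast_nonneg Metric.infDist_nonneg)
  refine ⟨fun n x => n / (1 + n * Metric.infDist x E), fun n => ?_, fun x => by simp,
    fun n x => ?_, ?_⟩
  · exact continuous_const.div (by fun_prop) fun x => (hden n x).ne'
  · have := Metric.infDist_nonneg (x := x) (s := E)
    rw [div_le_div_iff₀ (hden _ x) (hden _ x)]
    push_cast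
    nlinarith
  · ext x
    exact and_congr_right fun _ => tendsto_div_one_add_mul_infDist_atTop_iff hE hne x

/-- For every nondegenerate interval `I` and every `θ ∈ [0,1]` there is a sequence
`0 ≤ d₁ ≤ d₂ ≤ ⋯` of continuous functions on `I` such that `I_d` is nowhere dense in `I`
and `dim_H I_d = θ`. -/
theorem stmt_11 (I : Set ℝ) (hI : I.OrdConnected) (hInt : I.Nontrivial)
    (θ : ℝ) (hθ : θ ∈ Icc (0 : ℝ) 1) :
    ∃ d : ℕ → ℝ → ℝ, (∀ n, ContinuousOn (d n) I) ∧
      (∀ x ∈ I, 0 ≤ d 0 x) ∧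
      (∀ n, ∀ x ∈ I, d n x ≤ d (n + 1) x) ∧
      IsNowhereDense ((Subtype.val ⁻¹' limSet I d : Set I)) ∧
      dimH (limSet I d) = ENNReal.ofReal θ := by
  lift θ to ℝ≥0 using hθ.1
  obtain ⟨a, ha, b, hb, hab⟩ := hInt.exists_lt
  obtain ⟨E, hEab, hEne, hE, hE_null, hE_dim⟩ :=
    exists_closed_null_subset_Icc_dimH_eq hab (θ := θ) (by exact_mod_cast hθ.2)
  obtain ⟨d, hd_cont, hd_nonneg, hd_mono, hd_lim⟩ := exists_seq_limSet_eq I hE hEne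
  rw [inter_eq_right.2 (hEab.trans (hI.out ha hb))] at hd_lim
  refine ⟨d, fun n => (hd_cont n).continuousOn, fun x _ => hd_nonneg x, fun n x _ => hd_mono n x,
    ?_, ?_⟩
  · rw [hd_lim]
    exact (hE.isNowhereDense_of_volume_eq_zero hE_null).preimage_val
      (hI.subset_closure_interior hInt)
  · rw [hd_lim, hE_dim, ENNReal.ofReal_coe_nnreal]
end

section
/- Let I ⊆ ℝ be a nondegenerate interval and let F, G : I → ℝ be twice continuously differentiable functions with nowhere vanishing first derivatives. Then A[F](a) ≤ A[G](a) for every k ∈ ℕ and every tuple a ∈ I^k if and only if F''(x)/F'(x) ≤ G''(x)/G'(x) for all x ∈ I. -/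
/-!
After replacing `F` and `G` by `±F` and `±G`, which changes neither the means nor the ratios,
we may assume `F', G' > 0` (by Darboux, a nowhere vanishing derivative has constant sign). Then
`F''/F' ≤ G''/G'` says that `G'/F'` is increasing. For `u = A[F](a)` the function
`G - (G'/F')(u) * F` has derivative `F' * (G'/F' - (G'/F')(u))`, so it is minimal at `u`;
averaging over the tuple and using `F u = mean (F aᵢ)` gives `G u ≤ mean (G aᵢ) = G (A[G](a))`,
hence `A[F](a) ≤ A[G](a)`. Conversely, if the ratio inequality fails at a point, it fails strictly
on a nontrivial subinterval, where the strict form of the same argument gives `A[G] < A[F]` on a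
pair of distinct points.
-/

open Set Filter Topology

/-- The quasiarithmetic mean generated by `F` on the interval `I`:
`A[F](a₁,…,a_k) = F⁻¹((F(a₁)+⋯+F(a_k))/k)`, where the inverse is taken on `I`. -/
noncomputable def qaMean (I : Set ℝ) (F : ℝ → ℝ) {k : ℕ} (a : Fin k → ℝ) : ℝ :=
  Function.invFunOn F I ((∑ i, F (a i)) / k)

theorem HasDerivWithinAt.div_logDeriv {f g : ℝ → ℝ} {f' g' x : ℝ} {s : Set ℝ}
    (hg : HasDerivWithinAt g g' s x) (hf : HasDerivWithinAt f f' s x) (hfx : f x ≠ 0)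
    (hgx : g x ≠ 0) :
    HasDerivWithinAt (fun y => g y / f y) (g x / f x * (g' / g x - f' / f x)) s x :=
  (hg.div hf hfx).congr_deriv (by field_simp)

theorem sub_mul_eq_mul_div_sub {p q c : ℝ} (hp : p ≠ 0) : q - c * p = p * (q / p - c) := by
  field_simp

theorem Function.invFunOn_congr_of_iff {α β : Type*} [Nonempty α] {s : Set α} {f g : α → β}
    {b b' : β} (h : ∀ x ∈ s, f x = b ↔ g x = b') :
    Function.invFunOn f s b = Function.invFunOn g s b' := by
  have hsol : (fun x => x ∈ s ∧ f x = b) = fun x => x ∈ s ∧ g x = b' :=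
    funext fun x => propext (and_congr_right (h x))
  unfold Function.invFunOn
  rw [hsol]

section Calculus

variable {D : Set ℝ} {f f' g g' : ℝ → ℝ}

theorem hasDerivWithinAt_interior_of_subset {s : Set ℝ} (hs : s ⊆ D)
    (hf : ∀ x ∈ D, HasDerivWithinAt f (f' x) D x) :
    ∀ x ∈ interior s, HasDerivWithinAt f (f' x) (interior s) x :=
  fun x hx => (hf x (hs (interior_subset hx))).mono (interior_subset.trans hs)

theorem strictMonoOn_of_forall_hasDerivWithinAt_pos (hD : Convex ℝ D)
    (hf : ∀ x ∈ D, HasDerivWithinAt f (f' x) D x) (hf' : ∀ x ∈ D, 0 < f' x) :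
    StrictMonoOn f D :=
  strictMonoOn_of_hasDerivWithinAt_pos hD (fun x hx => (hf x hx).continuousWithinAt)
    (hasDerivWithinAt_interior_of_subset subset_rfl hf) fun x hx => hf' x (interior_subset hx)

theorem isMinOn_of_hasDerivWithinAt_sign (hD : Convex ℝ D) {u : ℝ} (hu : u ∈ D)
    (hf : ∀ x ∈ D, HasDerivWithinAt f (f' x) D x)
    (hleft : ∀ x ∈ D, x < u → f' x ≤ 0) (hright : ∀ x ∈ D, u < x → 0 ≤ f' x) :
    IsMinOn f D u := by
  have hfc : ContinuousOn f D := fun x hx => (hf x hx).continuousWithinAt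
  refine isMinOn_iff.2 fun x hx => (le_total x u).elim (fun hxu => ?_) fun hux => ?_
  · refine antitoneOn_of_hasDerivWithinAt_nonpos (hD.inter (convex_Iic u))
      (hfc.mono inter_subset_left) (hasDerivWithinAt_interior_of_subset inter_subset_left hf)
      (fun y hy => ?_) ⟨hx, hxu⟩ ⟨hu, self_mem_Iic⟩ hxu
    rw [interior_inter, interior_Iic] at hy
    exact hleft y (interior_subset hy.1) hy.2
  · refine monotoneOn_of_hasDerivWithinAt_nonneg (hD.inter (convex_Ici u))
      (hfc.mono inter_subset_left) (hasDerivWithinAt_interior_of_subset inter_subset_left hf)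
      (fun y hy => ?_) ⟨hu, self_mem_Ici⟩ ⟨hx, hux⟩ hux
    rw [interior_inter, interior_Ici] at hy
    exact hright y (interior_subset hy.1) hy.2

theorem apply_lt_of_hasDerivWithinAt_sign (hD : Convex ℝ D) {u : ℝ} (hu : u ∈ D)
    (hf : ∀ x ∈ D, HasDerivWithinAt f (f' x) D x)
    (hleft : ∀ x ∈ D, x < u → f' x < 0) (hright : ∀ x ∈ D, u < x → 0 < f' x) :
    ∀ x ∈ D, x ≠ u → f u < f x := by
  have hfc : ContinuousOn f D := fun x hx => (hf x hx).continuousWithinAt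
  intro x hx hne
  rcases hne.lt_or_gt with hxu | hux
  · refine strictAntiOn_of_hasDerivWithinAt_neg (hD.inter (convex_Iic u))
      (hfc.mono inter_subset_left) (hasDerivWithinAt_interior_of_subset inter_subset_left hf)
      (fun y hy => ?_) ⟨hx, hxu.le⟩ ⟨hu, self_mem_Iic⟩ hxu
    rw [interior_inter, interior_Iic] at hy
    exact hleft y (interior_subset hy.1) hy.2
  · refine strictMonoOn_of_hasDerivWithinAt_pos (hD.inter (convex_Ici u))
      (hfc.mono inter_subset_left) (hasDerivWithinAt_interior_of_subset inter_subset_left hf)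
      (fun y hy => ?_) ⟨hu, self_mem_Ici⟩ ⟨hx, hux.le⟩ hux
    rw [interior_inter, interior_Ici] at hy
    exact hright y (interior_subset hy.1) hy.2

theorem hasDerivWithinAt_div_logDeriv
    (hf : ∀ x ∈ D, HasDerivWithinAt f (f' x) D x) (hg : ∀ x ∈ D, HasDerivWithinAt g (g' x) D x)
    (hf0 : ∀ x ∈ D, 0 < f x) (hg0 : ∀ x ∈ D, 0 < g x) :
    ∀ x ∈ D, HasDerivWithinAt (fun y => g y / f y) (g x / f x * (g' x / g x - f' x / f x)) D x :=
  fun x hx => (hg x hx).div_logDeriv (hf x hx) (hf0 x hx).ne' (hg0 x hx).ne'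

theorem monotoneOn_div_of_logDeriv_le (hD : Convex ℝ D)
    (hf : ∀ x ∈ D, HasDerivWithinAt f (f' x) D x) (hg : ∀ x ∈ D, HasDerivWithinAt g (g' x) D x)
    (hf0 : ∀ x ∈ D, 0 < f x) (hg0 : ∀ x ∈ D, 0 < g x)
    (h : ∀ x ∈ D, f' x / f x ≤ g' x / g x) : MonotoneOn (fun x => g x / f x) D := by
  have hderiv := hasDerivWithinAt_div_logDeriv hf hg hf0 hg0
  refine monotoneOn_of_hasDerivWithinAt_nonneg hD (fun x hx => (hderiv x hx).continuousWithinAt)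
    (hasDerivWithinAt_interior_of_subset subset_rfl hderiv) fun x hx => ?_
  replace hx := interior_subset hx
  exact mul_nonneg (div_pos (hg0 x hx) (hf0 x hx)).le (sub_nonneg.2 (h x hx))

theorem strictMonoOn_div_of_logDeriv_lt (hD : Convex ℝ D)
    (hf : ∀ x ∈ D, HasDerivWithinAt f (f' x) D x) (hg : ∀ x ∈ D, HasDerivWithinAt g (g' x) D x)
    (hf0 : ∀ x ∈ D, 0 < f x) (hg0 : ∀ x ∈ D, 0 < g x)
    (h : ∀ x ∈ D, f' x / f x < g' x / g x) : StrictMonoOn (fun x => g x / f x) D := by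
  have hderiv := hasDerivWithinAt_div_logDeriv hf hg hf0 hg0
  refine strictMonoOn_of_forall_hasDerivWithinAt_pos hD hderiv fun x hx => ?_
  exact mul_pos (div_pos (hg0 x hx) (hf0 x hx)) (sub_pos.2 (h x hx))

end Calculus

section QuasiarithmeticMean

variable {I D : Set ℝ} {F : ℝ → ℝ} {k : ℕ} {a : Fin k → ℝ}

theorem qaMean_const_mul {c : ℝ} (hc : c ≠ 0) :
    qaMean I (fun x => c * F x) a = qaMean I F a := by
  refine Function.invFunOn_congr_of_iff fun x _ => ?_
  rw [← Finset.mul_sum, mul_div_assoc, mul_right_inj' hc]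

theorem mean_mem_image [NeZero k] (hD : IsPreconnected D) (hF : ContinuousOn F D)
    (ha : ∀ i, a i ∈ D) : (∑ i, F (a i)) / k ∈ F '' D := by
  have hconv : Convex ℝ (F '' D) := (hD.image F hF).convex
  have hk : (k : ℝ) ≠ 0 := Nat.cast_ne_zero.2 (NeZero.ne k)
  convert hconv.sum_mem (t := Finset.univ) (w := fun _ => (k : ℝ)⁻¹) (z := fun i => F (a i))
    (fun _ _ => by positivity) (by simp [hk]) (fun i _ => mem_image_of_mem F (ha i)) using 1
  simp [← Finset.mul_sum, div_eq_inv_mul]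

theorem qaMean_mem_and_apply (h : (∑ i, F (a i)) / k ∈ F '' D) :
    qaMean D F a ∈ D ∧ F (qaMean D F a) = (∑ i, F (a i)) / k :=
  ⟨Function.invFunOn_mem h, Function.invFunOn_eq h⟩

theorem qaMean_eq_of_subset (hDI : D ⊆ I) (hF : InjOn F I)
    (h : (∑ i, F (a i)) / k ∈ F '' D) : qaMean D F a = qaMean I F a := by
  obtain ⟨hD, hFD⟩ := qaMean_mem_and_apply h
  obtain ⟨hI, hFI⟩ := qaMean_mem_and_apply (image_mono hDI h)
  exact hF (hDI hD) hI (hFD.trans hFI.symm)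

end QuasiarithmeticMean

section Comparison

variable {D : Set ℝ} {F F' G G' : ℝ → ℝ} {k : ℕ} [NeZero k] {a : Fin k → ℝ}

theorem le_mean_of_forall_sub_le {u c : ℝ} (hFu : F u = (∑ i, F (a i)) / k)
    (h : ∀ i, G u - c * F u ≤ G (a i) - c * F (a i)) : G u ≤ (∑ i, G (a i)) / k := by
  have hk : (0 : ℝ) < k := Nat.cast_pos.2 (Nat.pos_of_ne_zero (NeZero.ne k))
  have hsum := Finset.sum_le_sum fun i (_ : i ∈ Finset.univ) => h i
  simp only [Finset.sum_sub_distrib, ← Finset.mul_sum, Finset.sum_const, Finset.card_univ,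
    Fintype.card_fin, nsmul_eq_mul] at hsum
  rw [eq_div_iff hk.ne'] at hFu
  rw [le_div_iff₀ hk]
  linear_combination hsum + c * hFu

theorem lt_mean_of_forall_sub_le_of_exists_lt {u c : ℝ} (hFu : F u = (∑ i, F (a i)) / k)
    (h : ∀ i, G u - c * F u ≤ G (a i) - c * F (a i))
    (hlt : ∃ i, G u - c * F u < G (a i) - c * F (a i)) : G u < (∑ i, G (a i)) / k := by
  have hk : (0 : ℝ) < k := Nat.cast_pos.2 (Nat.pos_of_ne_zero (NeZero.ne k))
  obtain ⟨j, hj⟩ := hlt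
  have hsum := Finset.sum_lt_sum (fun i (_ : i ∈ Finset.univ) => h i) ⟨j, Finset.mem_univ j, hj⟩
  simp only [Finset.sum_sub_distrib, ← Finset.mul_sum, Finset.sum_const, Finset.card_univ,
    Fintype.card_fin, nsmul_eq_mul] at hsum
  rw [eq_div_iff hk.ne'] at hFu
  rw [lt_div_iff₀ hk]
  linear_combination hsum + c * hFu

theorem qaMean_le_qaMean_of_monotoneOn (hD : Convex ℝ D)
    (hF : ∀ x ∈ D, HasDerivWithinAt F (F' x) D x) (hG : ∀ x ∈ D, HasDerivWithinAt G (G' x) D x)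
    (hF' : ∀ x ∈ D, 0 < F' x) (hG' : ∀ x ∈ D, 0 < G' x)
    (hmono : MonotoneOn (fun x => G' x / F' x) D) (ha : ∀ i, a i ∈ D) :
    qaMean D F a ≤ qaMean D G a := by
  obtain ⟨hu, hFu⟩ := qaMean_mem_and_apply
    (mean_mem_image hD.isPreconnected (fun x hx => (hF x hx).continuousWithinAt) ha)
  obtain ⟨hv, hGv⟩ := qaMean_mem_and_apply
    (mean_mem_image hD.isPreconnected (fun x hx => (hG x hx).continuousWithinAt) ha)
  set u := qaMean D F a
  have htangent : IsMinOn (fun x => G x - G' u / F' u * F x) D u := by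
    refine isMinOn_of_hasDerivWithinAt_sign hD hu
      (fun x hx => (hG x hx).sub ((hF x hx).const_mul _)) (fun x hx hxu => ?_) fun x hx hux => ?_
    · rw [sub_mul_eq_mul_div_sub (hF' x hx).ne']
      exact mul_nonpos_of_nonneg_of_nonpos (hF' x hx).le (sub_nonpos.2 (hmono hx hu hxu.le))
    · rw [sub_mul_eq_mul_div_sub (hF' x hx).ne']
      exact mul_nonneg (hF' x hx).le (sub_nonneg.2 (hmono hu hx hux.le))
  have hGuv : G u ≤ G (qaMean D G a) :=
    hGv ▸ le_mean_of_forall_sub_le hFu fun i => isMinOn_iff.1 htangent _ (ha i)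
  exact ((strictMonoOn_of_forall_hasDerivWithinAt_pos hD hG hG').le_iff_le hu hv).1 hGuv

theorem qaMean_lt_qaMean_of_strictMonoOn (hD : Convex ℝ D)
    (hF : ∀ x ∈ D, HasDerivWithinAt F (F' x) D x) (hG : ∀ x ∈ D, HasDerivWithinAt G (G' x) D x)
    (hF' : ∀ x ∈ D, 0 < F' x) (hG' : ∀ x ∈ D, 0 < G' x)
    (hmono : StrictMonoOn (fun x => G' x / F' x) D) (ha : ∀ i, a i ∈ D) (hne : ∃ i j, a i ≠ a j) :
    qaMean D F a < qaMean D G a := by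
  obtain ⟨hu, hFu⟩ := qaMean_mem_and_apply
    (mean_mem_image hD.isPreconnected (fun x hx => (hF x hx).continuousWithinAt) ha)
  obtain ⟨hv, hGv⟩ := qaMean_mem_and_apply
    (mean_mem_image hD.isPreconnected (fun x hx => (hG x hx).continuousWithinAt) ha)
  set u := qaMean D F a
  have htangent : ∀ x ∈ D, x ≠ u → G u - G' u / F' u * F u < G x - G' u / F' u * F x := by
    refine apply_lt_of_hasDerivWithinAt_sign hD hu
      (fun x hx => (hG x hx).sub ((hF x hx).const_mul _)) (fun x hx hxu => ?_) fun x hx hux => ?_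
    · rw [sub_mul_eq_mul_div_sub (hF' x hx).ne']
      exact mul_neg_of_pos_of_neg (hF' x hx) (sub_neg.2 (hmono hx hu hxu))
    · rw [sub_mul_eq_mul_div_sub (hF' x hx).ne']
      exact mul_pos (hF' x hx) (sub_pos.2 (hmono hu hx hux))
  have hmoved : ∃ i, a i ≠ u := by
    obtain ⟨i, j, hij⟩ := hne
    by_contra! hfixed
    exact hij ((hfixed i).trans (hfixed j).symm)
  obtain ⟨i, hi⟩ := hmoved
  have hGuv : G u < G (qaMean D G a) := hGv ▸ lt_mean_of_forall_sub_le_of_exists_lt hFu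
    (fun j => (eq_or_ne (a j) u).elim (fun hj => by rw [hj]) fun hj => (htangent _ (ha j) hj).le)
    ⟨i, htangent _ (ha i) hi⟩
  exact ((strictMonoOn_of_forall_hasDerivWithinAt_pos hD hG hG').lt_iff_lt hu hv).1 hGuv

end Comparison

theorem Convex.exists_nontrivial_convex_subset_of_mem_nhdsWithin {I S : Set ℝ} (hI : Convex ℝ I)
    (hInt : I.Nontrivial) {x₀ : ℝ} (hx₀ : x₀ ∈ I) (hS : S ∈ 𝓝[I] x₀) :
    ∃ D ⊆ I ∩ S, Convex ℝ D ∧ D.Nontrivial := by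
  obtain ⟨η, hη, hball⟩ := Metric.mem_nhdsWithin_iff.1 hS
  have hacc : AccPt x₀ (𝓟 I) :=
    (uniqueDiffOn_convex hI (hI.nontrivial_iff_nonempty_interior.1 hInt) x₀ hx₀).accPt
  obtain ⟨z, ⟨hzx, hzI⟩, hzη⟩ :=
    ((accPt_iff_frequently.1 hacc).and_eventually (Metric.ball_mem_nhds x₀ hη)).exists
  exact ⟨Metric.ball x₀ η ∩ I, fun x hx => ⟨hx.2, hball hx⟩, (convex_ball x₀ η).inter hI,
    z, ⟨hzη, hzI⟩, x₀, ⟨Metric.mem_ball_self hη, hx₀⟩, hzx⟩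

theorem exists_ne_zero_forall_mul_pos {I : Set ℝ} (hI : Convex ℝ I) {F F' : ℝ → ℝ}
    (hF : ∀ x ∈ I, HasDerivWithinAt F (F' x) I x) (hF' : ∀ x ∈ I, F' x ≠ 0) :
    ∃ δ : ℝ, δ ≠ 0 ∧ ∀ x ∈ I, 0 < δ * F' x := by
  rcases hasDerivWithinAt_forall_lt_or_forall_gt_of_forall_ne hI hF hF' with hneg | hpos
  · exact ⟨-1, by norm_num, fun x hx => by linarith [hneg x hx]⟩
  · exact ⟨1, one_ne_zero, fun x hx => by linarith [hpos x hx]⟩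

section SecondDerivatives

variable {I : Set ℝ} {F F' F'' G G' G'' : ℝ → ℝ}

theorem exists_qaMean_lt_qaMean_of_logDeriv_lt (hI : Convex ℝ I) (hInt : I.Nontrivial)
    (hF1 : ∀ x ∈ I, HasDerivWithinAt F (F' x) I x) (hF2 : ∀ x ∈ I, HasDerivWithinAt F' (F'' x) I x)
    (hF2c : ContinuousOn F'' I)
    (hG1 : ∀ x ∈ I, HasDerivWithinAt G (G' x) I x) (hG2 : ∀ x ∈ I, HasDerivWithinAt G' (G'' x) I x)
    (hG2c : ContinuousOn G'' I) (hF' : ∀ x ∈ I, 0 < F' x) (hG' : ∀ x ∈ I, 0 < G' x)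
    {x₀ : ℝ} (hx₀ : x₀ ∈ I) (hlt : G'' x₀ / G' x₀ < F'' x₀ / F' x₀) :
    ∃ a : Fin 2 → ℝ, (∀ i, a i ∈ I) ∧ qaMean I G a < qaMean I F a := by
  have hratio {H' H'' : ℝ → ℝ} (hH2 : ∀ x ∈ I, HasDerivWithinAt H' (H'' x) I x)
      (hH2c : ContinuousOn H'' I) (hH' : ∀ x ∈ I, 0 < H' x) :
      ContinuousWithinAt (fun x => H'' x / H' x) I x₀ :=
    (hH2c x₀ hx₀).div (hH2 x₀ hx₀).continuousWithinAt (hH' x₀ hx₀).ne'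
  obtain ⟨D, hDIS, hD, p, hp, q, hq, hpq⟩ :=
    hI.exists_nontrivial_convex_subset_of_mem_nhdsWithin hInt hx₀
      ((hratio hG2 hG2c hG').eventually_lt (hratio hF2 hF2c hF') hlt)
  have hDI : D ⊆ I := fun x hx => (hDIS hx).1
  have hrestrict {H H' : ℝ → ℝ} (hH : ∀ x ∈ I, HasDerivWithinAt H (H' x) I x) :
      ∀ x ∈ D, HasDerivWithinAt H (H' x) D x := fun x hx => (hH x (hDI hx)).mono hDI
  have hmean {H H' : ℝ → ℝ} (hH : ∀ x ∈ I, HasDerivWithinAt H (H' x) I x)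
      (hH' : ∀ x ∈ I, 0 < H' x) (a : Fin 2 → ℝ) (ha : ∀ i, a i ∈ D) :
      qaMean D H a = qaMean I H a :=
    qaMean_eq_of_subset hDI (strictMonoOn_of_forall_hasDerivWithinAt_pos hI hH hH').injOn
      (mean_mem_image hD.isPreconnected (fun x hx => (hrestrict hH x hx).continuousWithinAt) ha)
  have ha : ∀ i, ![p, q] i ∈ D := by simp [Fin.forall_fin_two, hp, hq]
  refine ⟨![p, q], fun i => hDI (ha i), ?_⟩
  rw [← hmean hF1 hF' _ ha, ← hmean hG1 hG' _ ha]
  exact qaMean_lt_qaMean_of_strictMonoOn hD (hrestrict hG1) (hrestrict hF1)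
    (fun x hx => hG' x (hDI hx)) (fun x hx => hF' x (hDI hx))
    (strictMonoOn_div_of_logDeriv_lt hD (hrestrict hG2) (hrestrict hF2)
      (fun x hx => hG' x (hDI hx)) (fun x hx => hF' x (hDI hx)) fun x hx => (hDIS hx).2)
    ha ⟨0, 1, by simpa using hpq⟩

theorem qaMean_le_qaMean_iff_of_pos (hI : Convex ℝ I) (hInt : I.Nontrivial)
    (hF1 : ∀ x ∈ I, HasDerivWithinAt F (F' x) I x) (hF2 : ∀ x ∈ I, HasDerivWithinAt F' (F'' x) I x)
    (hF2c : ContinuousOn F'' I)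
    (hG1 : ∀ x ∈ I, HasDerivWithinAt G (G' x) I x) (hG2 : ∀ x ∈ I, HasDerivWithinAt G' (G'' x) I x)
    (hG2c : ContinuousOn G'' I) (hF' : ∀ x ∈ I, 0 < F' x) (hG' : ∀ x ∈ I, 0 < G' x) :
    (∀ (k : ℕ) (a : Fin (k + 1) → ℝ), (∀ i, a i ∈ I) → qaMean I F a ≤ qaMean I G a) ↔
      ∀ x ∈ I, F'' x / F' x ≤ G'' x / G' x := by
  refine ⟨fun hmeans x₀ hx₀ => le_of_not_gt fun hlt => ?_, fun h k a ha =>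
    qaMean_le_qaMean_of_monotoneOn hI hF1 hG1 hF' hG'
      (monotoneOn_div_of_logDeriv_le hI hF2 hG2 hF' hG' h) ha⟩
  obtain ⟨a, ha, hGF⟩ := exists_qaMean_lt_qaMean_of_logDeriv_lt hI hInt hF1 hF2 hF2c hG1 hG2 hG2c
    hF' hG' hx₀ hlt
  exact (hmeans 1 a ha).not_gt hGF

end SecondDerivatives

/-- For twice continuously differentiable `F, G` on `I` with nowhere vanishing first
derivatives, `A[F] ≤ A[G]` on all tuples iff `F''/F' ≤ G''/G'` on `I`. -/
theorem stmt_17 (I : Set ℝ) (hI : I.OrdConnected) (hInt : I.Nontrivial)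
    (F F' F'' G G' G'' : ℝ → ℝ)
    (hF1 : ∀ x ∈ I, HasDerivWithinAt F (F' x) I x)
    (hF2 : ∀ x ∈ I, HasDerivWithinAt F' (F'' x) I x)
    (hF2c : ContinuousOn F'' I)
    (hF'ne : ∀ x ∈ I, F' x ≠ 0)
    (hG1 : ∀ x ∈ I, HasDerivWithinAt G (G' x) I x)
    (hG2 : ∀ x ∈ I, HasDerivWithinAt G' (G'' x) I x)
    (hG2c : ContinuousOn G'' I)
    (hG'ne : ∀ x ∈ I, G' x ≠ 0) :
    (∀ (k : ℕ) (a : Fin (k + 1) → ℝ), (∀ i, a i ∈ I) →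
      qaMean I F a ≤ qaMean I G a) ↔
    (∀ x ∈ I, F'' x / F' x ≤ G'' x / G' x) := by
  have hIc : Convex ℝ I := hI.convex
  obtain ⟨δ, hδ, hδF⟩ := exists_ne_zero_forall_mul_pos hIc hF1 hF'ne
  obtain ⟨ε, hε, hεG⟩ := exists_ne_zero_forall_mul_pos hIc hG1 hG'ne
  have key := qaMean_le_qaMean_iff_of_pos hIc hInt
    (fun x hx => (hF1 x hx).const_mul δ) (fun x hx => (hF2 x hx).const_mul δ)
    (continuousOn_const.mul hF2c) (fun x hx => (hG1 x hx).const_mul ε)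
    (fun x hx => (hG2 x hx).const_mul ε) (continuousOn_const.mul hG2c) hδF hεG
  simpa only [qaMean_const_mul hδ, qaMean_const_mul hε, mul_div_mul_left _ _ hδ,
    mul_div_mul_left _ _ hε] using key
end

section
/- Let I ⊆ ℝ be a nondegenerate interval and let (F_n)_{n=1}^∞ be a sequence of continuous strictly monotone functions F_n : I → ℝ. Then (F_n) is QA-maximal, i.e. lim_{n→∞} A[F_n](a) = max(a₁,…,a_k) for every k ∈ ℕ and every tuple a ∈ I^k, if and only if lim_{n→∞} (F_n(x) − F_n(y))/(F_n(z) − F_n(y)) = 0 for all x, y, z ∈ I with x < y < z. -/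
open Set Filter Topology

/-- A sequence of generators is QA-maximal if the associated quasiarithmetic means tend
pointwise to the maximum. -/
def IsQAMaximal (I : Set ℝ) (F : ℕ → ℝ → ℝ) : Prop :=
  ∀ (k : ℕ) (a : Fin (k + 1) → ℝ), (∀ i, a i ∈ I) →
    Tendsto (fun n => qaMean I (F n) a) atTop
      (𝓝 (Finset.univ.sup' Finset.univ_nonempty a))

/-! For increasing `F`, a point `y ∈ I` lies below `A[F](a)` iff `∑ i, (F aᵢ - F y) > 0`.
Applied to the tuple `(x, …, x, z)` with `k` copies of `x`, QA-maximality says that eventually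
`k (Fₙ x - Fₙ y) + (Fₙ z - Fₙ y) > 0`, i.e. the ratio `rₙ` for `x < y < z` is eventually
`> -1/k`; since `rₙ < 0`, this is `rₙ → 0`. Conversely, for `m = min a < y < M = max a` the sum is
at least `(Fₙ M - Fₙ y) (1 + k rₙ)` with `rₙ` the ratio for `m < y < M`, so `rₙ → 0` pushes the
means above every `y < M`; they never exceed `M`. Decreasing generators are reduced to increasing
ones by `F ↦ -F`, which changes neither the means nor the ratios. -/

open Finset

theorem tendsto_zero_of_forall_one_add_mul_pos {α : Type*} {l : Filter α} {r : α → ℝ}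
    (hr : ∀ n, r n ≤ 0) (h : ∀ k : ℕ, ∀ᶠ n in l, 0 < 1 + k * r n) : Tendsto r l (𝓝 0) := by
  refine Metric.tendsto_nhds.2 fun ε hε => ?_
  obtain ⟨k, hk⟩ := exists_nat_gt (1 / ε)
  have hk0 : (0 : ℝ) < k := lt_trans (by positivity) hk
  rw [div_lt_iff₀ hε] at hk
  filter_upwards [h k] with n hn
  rw [Real.dist_0_eq_abs, abs_of_nonpos (hr n)]
  nlinarith

section Mean

variable {I : Set ℝ} {F : ℝ → ℝ} {k : ℕ} {a : Fin (k + 1) → ℝ}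

theorem qaMean_mem_and_apply_s18 (hI : I.OrdConnected) (hF : ContinuousOn F I) (ha : ∀ i, a i ∈ I) :
    qaMean I F a ∈ I ∧ F (qaMean I F a) = (∑ i, F (a i)) / (k + 1) := by
  have havg : (∑ i, F (a i)) / (k + 1) ∈ F '' I := by
    have hconv : Convex ℝ (F '' I) := (hI.isPreconnected.image F hF).ordConnected.convex
    have := hconv.sum_mem (t := univ) (w := fun _ => 1 / ((k : ℝ) + 1))
      (fun _ _ => by positivity) (by simp; field_simp) (fun i _ => mem_image_of_mem F (ha i))
    simpa [sum_div, div_eq_inv_mul, mul_sum] using this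
  have hq : qaMean I F a = Function.invFunOn F I ((∑ i, F (a i)) / (k + 1)) := by
    simp [qaMean]
  rw [hq]
  exact ⟨Function.invFunOn_mem havg, Function.invFunOn_eq havg⟩

theorem qaMean_neg (hI : I.OrdConnected) (hF : ContinuousOn F I) (hinj : InjOn F I)
    (ha : ∀ i, a i ∈ I) : qaMean I (-F) a = qaMean I F a := by
  obtain ⟨hmem, hval⟩ := qaMean_mem_and_apply_s18 hI hF ha
  obtain ⟨hmem', hval'⟩ := qaMean_mem_and_apply_s18 hI hF.neg ha
  refine hinj hmem' hmem ?_
  simp only [Pi.neg_apply, sum_neg_distrib, neg_div, neg_inj] at hval'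
  rw [hval', hval]

theorem exists_strictMonoOn_and_eq_or_eq_neg (h : StrictMonoOn F I ∨ StrictAntiOn F I) :
    ∃ G, (G = F ∨ G = -F) ∧ StrictMonoOn G I :=
  h.elim (fun h => ⟨F, .inl rfl, h⟩) fun h => ⟨-F, .inr rfl, h.neg⟩

namespace StrictMonoOn

variable (hI : I.OrdConnected) (hF : StrictMonoOn F I) (hc : ContinuousOn F I) (ha : ∀ i, a i ∈ I)
include hI hF hc ha

theorem lt_qaMean_iff {y : ℝ} (hy : y ∈ I) : y < qaMean I F a ↔ 0 < ∑ i, (F (a i) - F y) := by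
  obtain ⟨hmem, hval⟩ := qaMean_mem_and_apply_s18 hI hc ha
  rw [← hF.lt_iff_lt hy hmem, hval, lt_div_iff₀ (by positivity), sum_sub_distrib, sum_const,
    card_univ, Fintype.card_fin, nsmul_eq_mul]
  push_cast
  constructor <;> intro <;> linarith

theorem le_qaMean_iff {y : ℝ} (hy : y ∈ I) : y ≤ qaMean I F a ↔ 0 ≤ ∑ i, (F (a i) - F y) := by
  obtain ⟨hmem, hval⟩ := qaMean_mem_and_apply_s18 hI hc ha
  rw [← hF.le_iff_le hy hmem, hval, le_div_iff₀ (by positivity), sum_sub_distrib, sum_const,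
    card_univ, Fintype.card_fin, nsmul_eq_mul]
  push_cast
  constructor <;> intro <;> linarith

theorem qaMean_le_sup' : qaMean I F a ≤ univ.sup' univ_nonempty a := by
  obtain ⟨j, -, hj⟩ := exists_mem_eq_sup' univ_nonempty a
  have hmax : univ.sup' univ_nonempty a ∈ I := hj ▸ ha j
  refine not_lt.1 fun hlt => ((hF.lt_qaMean_iff hI hc ha hmax).1 hlt).not_ge ?_
  exact sum_nonpos fun i _ => sub_nonpos.2 <| hF.monotoneOn (ha i) hmax (le_sup' a (mem_univ i))

theorem inf'_le_qaMean : univ.inf' univ_nonempty a ≤ qaMean I F a := by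
  obtain ⟨j, -, hj⟩ := exists_mem_eq_inf' univ_nonempty a
  have hmin : univ.inf' univ_nonempty a ∈ I := hj ▸ ha j
  refine (hF.le_qaMean_iff hI hc ha hmin).2 (sum_nonneg fun i _ => ?_)
  exact sub_nonneg.2 <| hF.monotoneOn hmin (ha i) (inf'_le a (mem_univ i))

theorem lt_qaMean_of_one_add_mul_pos {y : ℝ} (hy : y ∈ I) (hyM : y < univ.sup' univ_nonempty a)
    (h : 0 < 1 + k * ((F (univ.inf' univ_nonempty a) - F y) /
      (F (univ.sup' univ_nonempty a) - F y))) : y < qaMean I F a := by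
  obtain ⟨j, -, hj⟩ := exists_mem_eq_sup' univ_nonempty a
  obtain ⟨j', -, hj'⟩ := exists_mem_eq_inf' univ_nonempty a
  set M := univ.sup' univ_nonempty a
  set m := univ.inf' univ_nonempty a
  have hmI : m ∈ I := hj' ▸ ha j'
  have hyM' : 0 < F M - F y := sub_pos.2 <| hF hy (hj ▸ ha j) hyM
  have hterm : F M - F m ≤ ∑ i, (F (a i) - F m) := by
    rw [hj]
    exact single_le_sum
      (fun i _ => sub_nonneg.2 <| hF.monotoneOn hmI (ha i) (inf'_le a (mem_univ i))) (mem_univ j)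
  have hsplit : ∑ i, (F (a i) - F y) = ∑ i, (F (a i) - F m) + (k + 1) * (F m - F y) := by
    simp only [sum_sub_distrib, sum_const, card_univ, Fintype.card_fin, nsmul_eq_mul]
    push_cast
    ring
  have hkey : (F M - F y) * (1 + k * ((F m - F y) / (F M - F y))) =
      F M - F y + k * (F m - F y) := by
    field_simp
  refine (hF.lt_qaMean_iff hI hc ha hy).2 ?_
  linarith [mul_pos hyM' h]

end StrictMonoOn

end Mean

section Sequence

variable {I : Set ℝ} {F : ℕ → ℝ → ℝ}

theorem sup'_snoc_const {k : ℕ} {x z : ℝ} (hxz : x ≤ z) :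
    univ.sup' univ_nonempty (Fin.snoc (fun _ : Fin k => x) z : Fin (k + 1) → ℝ) = z := by
  refine le_antisymm (sup'_le _ _ fun i _ => ?_) ?_
  · induction i using Fin.lastCases <;> simp [hxz]
  · exact (le_sup'_iff _).2 ⟨Fin.last k, mem_univ _, by simp⟩

theorem sum_snoc_const (f : ℝ → ℝ) (k : ℕ) (x z : ℝ) :
    ∑ i, f ((Fin.snoc (fun _ : Fin k => x) z : Fin (k + 1) → ℝ) i) = k * f x + f z := by
  simp [Fin.sum_univ_castSucc]

theorem IsQAMaximal.tendsto_ratio (hQA : IsQAMaximal I F) (hI : I.OrdConnected)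
    (hcont : ∀ n, ContinuousOn (F n) I) (hmono : ∀ n, StrictMonoOn (F n) I)
    {x y z : ℝ} (hx : x ∈ I) (hy : y ∈ I) (hz : z ∈ I) (hxy : x < y) (hyz : y < z) :
    Tendsto (fun n => (F n x - F n y) / (F n z - F n y)) atTop (𝓝 0) := by
  refine tendsto_zero_of_forall_one_add_mul_pos (fun n => div_nonpos_of_nonpos_of_nonneg
    (sub_nonpos.2 (hmono n hx hy hxy).le) (sub_nonneg.2 (hmono n hy hz hyz).le)) fun k => ?_
  set a : Fin (k + 1) → ℝ := Fin.snoc (fun _ : Fin k => x) z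
  have ha : ∀ i, a i ∈ I := Fin.lastCases (by simpa [a] using hz) (fun _ => by simpa [a] using hx)
  have hmax := (hQA k a ha).eventually (lt_mem_nhds (a := y) (by
    rwa [sup'_snoc_const (hxy.trans hyz).le]))
  filter_upwards [hmax] with n hn
  rw [(hmono n).lt_qaMean_iff hI (hcont n) ha hy, sum_sub_distrib, sum_snoc_const] at hn
  have hzy : 0 < F n z - F n y := sub_pos.2 (hmono n hy hz hyz)
  have hkey : 1 + k * ((F n x - F n y) / (F n z - F n y)) =
      (k * (F n x - F n y) + (F n z - F n y)) / (F n z - F n y) := by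
    field_simp
    ring
  rw [hkey]
  refine div_pos ?_ hzy
  simp only [sum_const, card_univ, Fintype.card_fin, nsmul_eq_mul] at hn
  push_cast at hn
  linarith

theorem isQAMaximal_of_tendsto_ratio (hI : I.OrdConnected) (hcont : ∀ n, ContinuousOn (F n) I)
    (hmono : ∀ n, StrictMonoOn (F n) I)
    (h : ∀ x ∈ I, ∀ y ∈ I, ∀ z ∈ I, x < y → y < z →
      Tendsto (fun n => (F n x - F n y) / (F n z - F n y)) atTop (𝓝 0)) :
    IsQAMaximal I F := by
  intro k a ha
  obtain ⟨j, -, hj⟩ := exists_mem_eq_sup' univ_nonempty a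
  obtain ⟨j', -, hj'⟩ := exists_mem_eq_inf' univ_nonempty a
  set M := univ.sup' univ_nonempty a
  set m := univ.inf' univ_nonempty a
  refine tendsto_order.2 ⟨fun b hb => ?_, fun b hb => Eventually.of_forall fun n =>
    ((hmono n).qaMean_le_sup' hI (hcont n) ha).trans_lt hb⟩
  rcases lt_or_ge b m with hbm | hmb
  · exact Eventually.of_forall fun n => hbm.trans_le ((hmono n).inf'_le_qaMean hI (hcont n) ha)
  obtain ⟨y, hby, hyM⟩ := exists_between hb
  have hmy : m < y := hmb.trans_lt hby
  have hmI : m ∈ I := hj' ▸ ha j'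
  have hMI : M ∈ I := hj ▸ ha j
  have hyI : y ∈ I := hI.out hmI hMI ⟨hmy.le, hyM.le⟩
  have hlim : Tendsto (fun n => 1 + k * ((F n m - F n y) / (F n M - F n y))) atTop
      (𝓝 (1 + k * 0)) :=
    tendsto_const_nhds.add (tendsto_const_nhds.mul (h m hmI y hyI M hMI hmy hyM))
  filter_upwards [hlim.eventually (lt_mem_nhds (a := 0) (by simp))] with n hn
  exact hby.trans <| (hmono n).lt_qaMean_of_one_add_mul_pos hI (hcont n) ha hyI hyM hn

theorem isQAMaximal_iff_of_strictMonoOn (hI : I.OrdConnected) (hcont : ∀ n, ContinuousOn (F n) I)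
    (hmono : ∀ n, StrictMonoOn (F n) I) :
    IsQAMaximal I F ↔ ∀ x ∈ I, ∀ y ∈ I, ∀ z ∈ I, x < y → y < z →
      Tendsto (fun n => (F n x - F n y) / (F n z - F n y)) atTop (𝓝 0) :=
  ⟨fun hQA _ hx _ hy _ hz hxy hyz => hQA.tendsto_ratio hI hcont hmono hx hy hz hxy hyz,
    isQAMaximal_of_tendsto_ratio hI hcont hmono⟩

theorem isQAMaximal_congr {G : ℕ → ℝ → ℝ}
    (h : ∀ n k (a : Fin (k + 1) → ℝ), (∀ i, a i ∈ I) → qaMean I (F n) a = qaMean I (G n) a) :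
    IsQAMaximal I F ↔ IsQAMaximal I G := by
  refine forall₃_congr fun k a ha => ?_
  simp only [h _ k a ha]

end Sequence

theorem stmt_18_general (I : Set ℝ) (hI : I.OrdConnected)
    (F : ℕ → ℝ → ℝ)
    (hcont : ∀ n, ContinuousOn (F n) I)
    (hmono : ∀ n, StrictMonoOn (F n) I ∨ StrictAntiOn (F n) I) :
    IsQAMaximal I F ↔
    (∀ x ∈ I, ∀ y ∈ I, ∀ z ∈ I, x < y → y < z →
      Tendsto (fun n => (F n x - F n y) / (F n z - F n y)) atTop (𝓝 0)) := by
  choose G hGF hGmono using fun n => exists_strictMonoOn_and_eq_or_eq_neg (hmono n)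
  have hGcont : ∀ n, ContinuousOn (G n) I := fun n => by
    rcases hGF n with h | h <;> rw [h]
    exacts [hcont n, (hcont n).neg]
  have hmean : ∀ n k (a : Fin (k + 1) → ℝ), (∀ i, a i ∈ I) →
      qaMean I (F n) a = qaMean I (G n) a := by
    intro n k a ha
    have hinj : InjOn (F n) I := (hmono n).elim StrictMonoOn.injOn StrictAntiOn.injOn
    rcases hGF n with h | h <;> rw [h]
    exact (qaMean_neg hI (hcont n) hinj ha).symm
  have hratio : ∀ n x y z,
      (G n x - G n y) / (G n z - G n y) = (F n x - F n y) / (F n z - F n y) := by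
    intro n x y z
    rcases hGF n with h | h <;> rw [h]
    simp only [Pi.neg_apply, neg_sub_neg, ← neg_sub (F n z), ← neg_sub (F n x), neg_div_neg_eq]
  rw [isQAMaximal_congr hmean, isQAMaximal_iff_of_strictMonoOn hI hGcont hGmono]
  simp only [hratio]

/-- A sequence `(F_n)` of continuous strictly monotone functions on `I` is QA-maximal iff
`(F_n(x) - F_n(y))/(F_n(z) - F_n(y)) → 0` for all `x < y < z` in `I`. -/
theorem stmt_18 (I : Set ℝ) (hI : I.OrdConnected) (hInt : I.Nontrivial)
    (F : ℕ → ℝ → ℝ)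
    (hcont : ∀ n, ContinuousOn (F n) I)
    (hmono : ∀ n, StrictMonoOn (F n) I ∨ StrictAntiOn (F n) I) :
    IsQAMaximal I F ↔
    (∀ x ∈ I, ∀ y ∈ I, ∀ z ∈ I, x < y → y < z →
      Tendsto (fun n => (F n x - F n y) / (F n z - F n y)) atTop (𝓝 0)) :=
  stmt_18_general I hI F hcont hmono
end
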